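/- arXiv:2206.02477 — 11 statements merged into one kernel-verified Lean document; each statement's English description precedes it below -/
import Mathlib

section
/- Let n ≥ 1 and let 𝒫₁, …, 𝒫ₙ be nonempty sets of Borel probability measures on [0,∞), each containing only measures with finite mean. Let T be the robust thresholds associated with 𝒫₁, …, 𝒫ₙ. Consider the deterministic threshold stopping rule that, given offer values x₁, …, xₙ ∈ [0,∞), accepts the first offer i ∈ {1,…,n} with xᵢ ≥ T(i) (this rule always accepts some offer, since T(n) = 0). Then for every choice of measures Pᵢ ∈ 𝒫ᵢ (i = 1,…,n), the expected value of the accepted offer under the product measure P₁ ⊗ ⋯ ⊗ Pₙ, i.e. ∫ x_{i*(x)} d(P₁ ⊗ ⋯ ⊗ Pₙ)(x) where i*(x) = min{ i : xᵢ ≥ T(i) }, is at least T(0). -/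
/-!
Let `V i` be the expected value collected by the threshold rule from offer `i + 1` on, so
`V n = 0 = T n`. Conditioning on offer `i + 1`, the rule takes it if it is at least `T (i + 1)`
and otherwise continues, earning `V (i + 1)`; if `V (i + 1) ≥ T (i + 1)` this pays at least
`∫ max (T (i + 1)) x dP_{i+1}`, which bounds the infimum `T i` since `P_{i+1} ∈ 𝒫_{i+1}`.
Backward induction gives `V 0 ≥ T 0`.
-/

open MeasureTheory

/-- Backward robust thresholds: `robustTAux Ps n k = T(n - k)`, where
`T(n) = 0` and `T(i) = inf_{P ∈ Ps (i+1)} ∫ max (T (i+1)) x dP`. -/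
noncomputable def robustTAux (Ps : ℕ → Set (Measure ℝ)) (n : ℕ) : ℕ → ℝ
  | 0 => 0
  | k + 1 => sInf ((fun P => ∫ x, max (robustTAux Ps n k) x ∂P) '' Ps (n - k))

/-- The robust threshold `T(i)` for `0 ≤ i ≤ n`. -/
noncomputable def robustT (Ps : ℕ → Set (Measure ℝ)) (n i : ℕ) : ℝ :=
  robustTAux Ps n (n - i)

open scoped Classical in
/-- Value of the accepted offer: the first `j : Fin n` (representing offer `j+1`)
with `x j ≥ T (j+1)` is accepted; default value `0` if no offer is accepted. -/
noncomputable def acceptedValue (n : ℕ) (T : ℕ → ℝ) (x : Fin n → ℝ) : ℝ :=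
  if h : ∃ j : Fin n, T (j.1 + 1) ≤ x j then x (Fin.find (fun j : Fin n => T (j.1 + 1) ≤ x j) h)
  else 0

theorem acceptedValue_zero (S : ℕ → ℝ) : acceptedValue 0 S = 0 := by
  funext x
  simp [acceptedValue]

theorem acceptedValue_cons {m : ℕ} (S : ℕ → ℝ) (a : ℝ) (y : Fin m → ℝ) :
    acceptedValue (m + 1) S (Fin.cons a y) =
      if S 1 ≤ a then a else acceptedValue m (fun i => S (i + 1)) y := by
  by_cases ha : S 1 ≤ a
  · have hex : ∃ j : Fin (m + 1), S (j + 1) ≤ (Fin.cons a y : Fin (m + 1) → ℝ) j :=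
      ⟨0, by simpa using ha⟩
    rw [acceptedValue, dif_pos hex, (Fin.find_eq_zero hex).2 (by simpa using ha), if_pos ha]
    rfl
  · rw [if_neg ha, acceptedValue, acceptedValue]
    have hiff : (∃ j : Fin (m + 1), S (j + 1) ≤ (Fin.cons a y : Fin (m + 1) → ℝ) j) ↔
        ∃ j : Fin m, S (j + 1 + 1) ≤ y j := by
      simp [Fin.exists_fin_succ, ha]
    by_cases hex : ∃ j : Fin m, S (j + 1 + 1) ≤ y j
    · rw [dif_pos (hiff.2 hex), dif_pos hex, Fin.find_of_not_zero _ (by simpa using ha)]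
      simp
    · rw [dif_neg (mt hiff.1 hex), dif_neg hex]

section FinCons

variable {X : Type*} [MeasurableSpace X] {m : ℕ} (μ : Fin (m + 1) → Measure X)
  [∀ i, SigmaFinite (μ i)]

theorem coe_piFinSuccAbove_zero_symm :
    ⇑(MeasurableEquiv.piFinSuccAbove (fun _ : Fin (m + 1) => X) 0).symm =
      fun z => Fin.cons z.1 z.2 := by
  funext z
  simp [MeasurableEquiv.piFinSuccAbove_symm_apply, Fin.insertNthEquiv]

theorem integrable_pi_fin_succ_iff {f : (Fin (m + 1) → X) → ℝ} :
    Integrable f (Measure.pi μ) ↔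
      Integrable (fun z : X × (Fin m → X) => f (Fin.cons z.1 z.2))
        ((μ 0).prod (Measure.pi fun j => μ j.succ)) := by
  rw [← (measurePreserving_piFinSuccAbove μ 0).symm.integrable_comp_emb
    (MeasurableEquiv.measurableEmbedding _), coe_piFinSuccAbove_zero_symm]
  rfl

theorem integral_pi_fin_succ (f : (Fin (m + 1) → X) → ℝ) :
    ∫ x, f x ∂(Measure.pi μ) =
      ∫ z : X × (Fin m → X), f (Fin.cons z.1 z.2)
        ∂((μ 0).prod (Measure.pi fun j => μ j.succ)) := by
  rw [← (measurePreserving_piFinSuccAbove μ 0).symm.integral_comp', coe_piFinSuccAbove_zero_symm]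
  rfl

end FinCons

section StopOrContinue

variable {Y : Type*} [MeasurableSpace Y] {μ : Measure ℝ} {ν : Measure Y} {t : ℝ}
  {g : Y → ℝ}

theorem integrable_ite_le_fst [IsFiniteMeasure μ] [IsFiniteMeasure ν]
    (hμ : Integrable (fun x => x) μ) (hg : Integrable g ν) :
    Integrable (fun z : ℝ × Y => if t ≤ z.1 then z.1 else g z.2) (μ.prod ν) := by
  have hsplit : (fun z : ℝ × Y => if t ≤ z.1 then z.1 else g z.2) = fun z =>
      (Set.Ici t).indicator (fun x => x) z.1 + (Set.Iio t).indicator 1 z.1 * g z.2 := by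
    funext z
    by_cases h : t ≤ z.1 <;> simp [Set.indicator_apply, h]
  rw [hsplit]
  refine Integrable.add ?_ ?_
  · exact (hμ.indicator measurableSet_Ici).comp_fst ν
  · exact ((integrable_const 1).indicator measurableSet_Iio).mul_prod hg

theorem integral_max_le_integral_ite_le_fst [IsFiniteMeasure μ] [IsProbabilityMeasure ν]
    (hμ : Integrable (fun x => x) μ) (hg : Integrable g ν) (htg : t ≤ ∫ y, g y ∂ν) :
    ∫ a, max t a ∂μ ≤ ∫ z, (if t ≤ z.1 then z.1 else g z.2) ∂(μ.prod ν) := by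
  have hint := integrable_ite_le_fst (t := t) hμ hg
  rw [integral_prod _ hint]
  refine integral_mono ((integrable_const t).sup hμ) hint.integral_prod_left fun a => ?_
  by_cases h : t ≤ a
  · simp [h]
  · simpa [h, (not_le.1 h).le] using htg

end StopOrContinue

theorem integrable_acceptedValue {m : ℕ} (S : ℕ → ℝ) (Q : Fin m → Measure ℝ)
    [∀ j, IsFiniteMeasure (Q j)] (hQ : ∀ j, Integrable (fun x => x) (Q j)) :
    Integrable (acceptedValue m S) (Measure.pi Q) := by
  induction m generalizing S with
  | zero => simp [acceptedValue_zero]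
  | succ m ih =>
    rw [integrable_pi_fin_succ_iff]
    simp only [acceptedValue_cons]
    exact integrable_ite_le_fst (hQ 0) (ih _ _ fun j => hQ j.succ)

theorem le_integral_acceptedValue {m : ℕ} (S : ℕ → ℝ) (Q : Fin m → Measure ℝ)
    [∀ j, IsProbabilityMeasure (Q j)] (hQ : ∀ j, Integrable (fun x => x) (Q j))
    (hS : ∀ j : Fin m, S j ≤ ∫ x, max (S (j + 1)) x ∂(Q j)) (hSm : S m ≤ 0) :
    S 0 ≤ ∫ x, acceptedValue m S x ∂(Measure.pi Q) := by
  induction m generalizing S with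
  | zero => simpa [acceptedValue_zero] using hSm
  | succ m ih =>
    have hcont : S 1 ≤
        ∫ y, acceptedValue m (fun i => S (i + 1)) y ∂(Measure.pi fun j => Q j.succ) :=
      ih (fun i => S (i + 1)) _ (fun j => hQ j.succ) (fun j => by simpa using hS j.succ)
        (by simpa using hSm)
    rw [integral_pi_fin_succ]
    simp only [acceptedValue_cons]
    calc S 0 ≤ ∫ a, max (S 1) a ∂(Q 0) := by simpa using hS 0
      _ ≤ _ := integral_max_le_integral_ite_le_fst (hQ 0)
          (integrable_acceptedValue _ _ fun j => hQ j.succ) hcont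

theorem le_integral_max_left {P : Measure ℝ} [IsProbabilityMeasure P]
    (hP : Integrable (fun x => x) P) (t : ℝ) : t ≤ ∫ x, max t x ∂P := by
  calc t = ∫ _, t ∂P := by simp
    _ ≤ ∫ x, max t x ∂P :=
      integral_mono (integrable_const t) ((integrable_const t).sup hP) fun x => le_max_left t x

theorem robustT_self (Ps : ℕ → Set (Measure ℝ)) (n : ℕ) : robustT Ps n n = 0 := by
  simp [robustT, robustTAux]

theorem robustT_of_lt (Ps : ℕ → Set (Measure ℝ)) {n i : ℕ} (h : i < n) :
    robustT Ps n i = sInf ((fun P => ∫ x, max (robustT Ps n (i + 1)) x ∂P) '' Ps (i + 1)) := by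
  rw [robustT, show n - i = n - (i + 1) + 1 by omega, robustTAux,
    show n - (n - (i + 1)) = i + 1 by omega]
  rfl

theorem robustT_le_integral_max {Ps : ℕ → Set (Measure ℝ)} {n i : ℕ} (h : i < n)
    (hprob : ∀ P ∈ Ps (i + 1), IsProbabilityMeasure P)
    (hint : ∀ P ∈ Ps (i + 1), Integrable (fun x : ℝ => x) P)
    {P : Measure ℝ} (hP : P ∈ Ps (i + 1)) :
    robustT Ps n i ≤ ∫ x, max (robustT Ps n (i + 1)) x ∂P := by
  rw [robustT_of_lt Ps h]
  refine csInf_le ⟨robustT Ps n (i + 1), ?_⟩ ⟨P, hP, rfl⟩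
  rintro _ ⟨P', hP', rfl⟩
  have := hprob P' hP'
  exact le_integral_max_left (hint P' hP') _

theorem stmt0_general (n : ℕ) (Ps : ℕ → Set (Measure ℝ))
    (hprob : ∀ i, 1 ≤ i → i ≤ n → ∀ P ∈ Ps i, IsProbabilityMeasure P)
    (hint : ∀ i, 1 ≤ i → i ≤ n → ∀ P ∈ Ps i, Integrable (fun x : ℝ => x) P)
    (P : ℕ → Measure ℝ) (hP : ∀ i, 1 ≤ i → i ≤ n → P i ∈ Ps i) :
    robustT Ps n 0 ≤
      ∫ x, acceptedValue n (robustT Ps n) x ∂(Measure.pi fun j : Fin n => P (j.1 + 1)) := by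
  have hprob' (j : Fin n) := hprob (j + 1) (by omega) j.isLt
  have hint' (j : Fin n) := hint (j + 1) (by omega) j.isLt
  have hP' (j : Fin n) := hP (j + 1) (by omega) j.isLt
  have (j : Fin n) : IsProbabilityMeasure (P (j + 1)) := hprob' j _ (hP' j)
  refine le_integral_acceptedValue _ _ (fun j => hint' j _ (hP' j)) (fun j => ?_)
    (robustT_self Ps n).le
  exact robustT_le_integral_max j.isLt (hprob' j) (hint' j) (hP' j)

theorem stmt0 (n : ℕ) (hn : 1 ≤ n) (Ps : ℕ → Set (Measure ℝ))
    (hne : ∀ i, 1 ≤ i → i ≤ n → (Ps i).Nonempty)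
    (hprob : ∀ i, 1 ≤ i → i ≤ n → ∀ P ∈ Ps i, IsProbabilityMeasure P)
    (hsupp : ∀ i, 1 ≤ i → i ≤ n → ∀ P ∈ Ps i, P (Set.Ici (0 : ℝ)) = 1)
    (hint : ∀ i, 1 ≤ i → i ≤ n → ∀ P ∈ Ps i, Integrable (fun x : ℝ => x) P)
    (P : ℕ → Measure ℝ) (hP : ∀ i, 1 ≤ i → i ≤ n → P i ∈ Ps i) :
    robustT Ps n 0 ≤
      ∫ x, acceptedValue n (robustT Ps n) x ∂(Measure.pi fun j : Fin n => P (j.1 + 1)) :=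
  stmt0_general n Ps hprob hint P hP
end

section
/- Let n ∈ ℕ, let μ, L > 0 and σ² ≥ 0 with L ≤ 2μ and σ² ≤ μ(L − μ). Take 𝒫ᵢ = P₂(μ,σ²,L) for all i = 1,…,n. Then the robust thresholds satisfy T(i) = μ + (σ²/μ)·(1 − (σ²/(μ² + σ²))^{n−1−i}) for every i with 0 ≤ i ≤ n − 1, and T(n) = 0. -/
/-!
The extremal law in `P₂(μ,σ²,L)` is `r·δ₀ + (1-r)·δ_c` with `r = σ²/(μ²+σ²)` and `c = (μ²+σ²)/μ`.
For every feasible two-point law `p·δ_a + (1-p)·δ_b` one has `a ≤ μ` and `c ≤ b` (the second moment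
is at most `b` times the mean), so for a threshold `t ∈ [μ, c]` the value `∫ max t x` equals
`μ + p (t - a)`; the inequality `p (t - a) ≥ r t` then reduces to the polynomial identity
`p (t - a)(μ²+σ²) - σ² t = p a (a (t - μ) + (μ - a)(2t - b))`, whose right side is nonnegative
because `b ≤ L ≤ 2μ ≤ 2t`. Hence each backward step is the affine map `t ↦ μ + r t`, whose fixed
point is `c`, and `T(n - k) = c (1 - r^k)`.
-/

open MeasureTheory

/-- The two-point measure `p·δ_a + (1-p)·δ_b`. -/
noncomputable def twoPoint (p a b : ℝ) : Measure ℝ :=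
  ENNReal.ofReal p • Measure.dirac a + ENNReal.ofReal (1 - p) • Measure.dirac b

/-- `P₂(μ,σ²,L)`: two-point distributions `p·δ_a + (1-p)·δ_b` with `0 ≤ a ≤ b ≤ L`,
`p ∈ [0,1]`, mean `μ` and second moment `μ² + σ²`. -/
noncomputable def P2set (μ s2 L : ℝ) : Set (Measure ℝ) :=
  {P | ∃ p a b : ℝ, 0 ≤ a ∧ a ≤ b ∧ b ≤ L ∧ 0 ≤ p ∧ p ≤ 1 ∧
    p * a + (1 - p) * b = μ ∧ p * a ^ 2 + (1 - p) * b ^ 2 = μ ^ 2 + s2 ∧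
    P = twoPoint p a b}

theorem integral_twoPoint {p : ℝ} (hp₀ : 0 ≤ p) (hp₁ : p ≤ 1) (a b : ℝ) (f : ℝ → ℝ) :
    ∫ x, f x ∂twoPoint p a b = p * f a + (1 - p) * f b := by
  rw [twoPoint,
    integral_add_measure ((integrable_dirac enorm_lt_top).smul_measure ENNReal.ofReal_ne_top)
      ((integrable_dirac enorm_lt_top).smul_measure ENNReal.ofReal_ne_top),
    integral_smul_measure, integral_smul_measure, integral_dirac, integral_dirac,
    ENNReal.toReal_ofReal hp₀, ENNReal.toReal_ofReal (sub_nonneg.2 hp₁), smul_eq_mul, smul_eq_mul]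

section TwoPointMoments

variable {p a b μ s2 t : ℝ}

theorem twoPoint_max_zero_eq_mean (ha : 0 ≤ a) (hab : a ≤ b)
    (hm : p * a + (1 - p) * b = μ) : p * max 0 a + (1 - p) * max 0 b = μ := by
  rw [max_eq_right ha, max_eq_right (ha.trans hab), hm]

theorem mean_add_mul_le_twoPoint_max (hμ : 0 < μ) (ha : 0 ≤ a) (hab : a ≤ b)
    (hp₀ : 0 ≤ p) (hp₁ : p ≤ 1) (hm : p * a + (1 - p) * b = μ)
    (hv : p * a ^ 2 + (1 - p) * b ^ 2 = μ ^ 2 + s2)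
    (hμt : μ ≤ t) (htc : t * μ ≤ μ ^ 2 + s2) (hb2t : b ≤ 2 * t) :
    μ + s2 / (μ ^ 2 + s2) * t ≤ p * max t a + (1 - p) * max t b := by
  have hμa : a ≤ μ := by nlinarith [mul_nonneg (sub_nonneg.2 hp₁) (sub_nonneg.2 hab)]
  have hsecond : μ ^ 2 + s2 ≤ b * μ := by
    nlinarith [mul_nonneg hp₀ (mul_nonneg ha (sub_nonneg.2 hab))]
  have htb : t ≤ b := le_of_mul_le_mul_right (htc.trans hsecond) hμ
  have hidentity : p * (t - a) * (μ ^ 2 + s2) - s2 * t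
      = p * a * (a * (t - μ) + (μ - a) * (2 * t - b)) := by
    linear_combination (-(t * μ + t * (p * a + (1 - p) * b) - p * a * (2 * t - a - b))) * hm
      + (t - p * (t - a)) * hv
  have hgap : s2 * t ≤ p * (t - a) * (μ ^ 2 + s2) := by
    have : 0 ≤ p * a * (a * (t - μ) + (μ - a) * (2 * t - b)) := by
      have := mul_nonneg ha (sub_nonneg.2 hμt)
      have := mul_nonneg (sub_nonneg.2 hμa) (sub_nonneg.2 hb2t)
      positivity
    linarith
  have hμs2 : 0 < μ ^ 2 + s2 := by nlinarith
  rw [max_eq_left (hμa.trans hμt), max_eq_right htb]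
  calc μ + s2 / (μ ^ 2 + s2) * t = μ + s2 * t / (μ ^ 2 + s2) := by ring
    _ ≤ μ + p * (t - a) := by gcongr; exact (div_le_iff₀ hμs2).2 hgap
    _ = p * t + (1 - p) * b := by linear_combination -hm

end TwoPointMoments

section P2set

variable {μ s2 L : ℝ}

theorem twoPoint_extremal_mem_P2set (hμ : 0 < μ) (hs2 : 0 ≤ s2) (hfeas : s2 ≤ μ * (L - μ)) :
    twoPoint (s2 / (μ ^ 2 + s2)) 0 ((μ ^ 2 + s2) / μ) ∈ P2set μ s2 L := by
  have hμs2 : 0 < μ ^ 2 + s2 := by positivity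
  refine ⟨s2 / (μ ^ 2 + s2), 0, (μ ^ 2 + s2) / μ, le_rfl, by positivity, ?_, by positivity,
    ?_, ?_, ?_, rfl⟩
  · rw [div_le_iff₀ hμ]; nlinarith
  · rw [div_le_one hμs2]; linarith [sq_nonneg μ]
  · field_simp; ring
  · field_simp; ring

theorem sInf_integral_max_P2set (hμ : 0 < μ) (hs2 : 0 ≤ s2) (hL2μ : L ≤ 2 * μ)
    (hfeas : s2 ≤ μ * (L - μ)) {t : ℝ} (ht : t = 0 ∨ μ ≤ t) (htc : t * μ ≤ μ ^ 2 + s2) :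
    sInf ((fun P => ∫ x, max t x ∂P) '' P2set μ s2 L) = μ + s2 / (μ ^ 2 + s2) * t := by
  have hμs2 : 0 < μ ^ 2 + s2 := by positivity
  refine IsLeast.csInf_eq ⟨⟨_, twoPoint_extremal_mem_P2set hμ hs2 hfeas, ?_⟩, ?_⟩
  · have ht₀ : 0 ≤ t := by rcases ht with rfl | h <;> linarith
    have htc' : t ≤ (μ ^ 2 + s2) / μ := by rw [le_div_iff₀ hμ]; exact htc
    have hr₁ : s2 / (μ ^ 2 + s2) ≤ 1 := (div_le_one hμs2).2 (by nlinarith)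
    dsimp only
    rw [integral_twoPoint (by positivity) hr₁, max_eq_left ht₀, max_eq_right htc']
    field_simp
    ring
  · rintro _ ⟨_, ⟨p, a, b, ha, hab, hbL, hp₀, hp₁, hm, hv, rfl⟩, rfl⟩
    dsimp only
    rw [integral_twoPoint hp₀ hp₁]
    rcases ht with rfl | hμt
    · rw [twoPoint_max_zero_eq_mean ha hab hm]; simp
    · exact mean_add_mul_le_twoPoint_max hμ ha hab hp₀ hp₁ hm hv hμt htc (by linarith)

theorem robustTAux_P2set (hμ : 0 < μ) (hs2 : 0 ≤ s2) (hL2μ : L ≤ 2 * μ)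
    (hfeas : s2 ≤ μ * (L - μ)) (n k : ℕ) :
    robustTAux (fun _ => P2set μ s2 L) n k
      = (μ ^ 2 + s2) / μ * (1 - (s2 / (μ ^ 2 + s2)) ^ k) := by
  have hμs2 : 0 < μ ^ 2 + s2 := by positivity
  set r := s2 / (μ ^ 2 + s2) with hr
  have hr₀ : 0 ≤ r := by positivity
  have hr₁ : r ≤ 1 := (div_le_one hμs2).2 (by nlinarith)
  have hfixed : (μ ^ 2 + s2) / μ * (1 - r) = μ := by rw [hr]; field_simp; ring
  induction k with
  | zero => simp [robustTAux]
  | succ k ih =>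
    rw [robustTAux, ih]
    have ht : (μ ^ 2 + s2) / μ * (1 - r ^ k) = 0 ∨ μ ≤ (μ ^ 2 + s2) / μ * (1 - r ^ k) := by
      rcases k with _ | k
      · simp
      · refine Or.inr (hfixed.symm.trans_le ?_)
        gcongr
        exact pow_le_of_le_one hr₀ hr₁ k.succ_ne_zero
    have htc : (μ ^ 2 + s2) / μ * (1 - r ^ k) * μ ≤ μ ^ 2 + s2 := by
      rw [div_mul_eq_mul_div, div_mul_cancel₀ _ hμ.ne']
      nlinarith [pow_nonneg hr₀ k]
    rw [sInf_integral_max_P2set hμ hs2 hL2μ hfeas ht htc, ← hr]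
    linear_combination -hfixed

end P2set

theorem stmt2_general (n : ℕ) (μ L s2 : ℝ) (hμ : 0 < μ) (hs2 : 0 ≤ s2)
    (hL2μ : L ≤ 2 * μ) (hfeas : s2 ≤ μ * (L - μ)) :
    (∀ i : ℕ, i + 1 ≤ n →
      robustT (fun _ => P2set μ s2 L) n i
        = μ + s2 / μ * (1 - (s2 / (μ ^ 2 + s2)) ^ (n - 1 - i))) ∧
    robustT (fun _ => P2set μ s2 L) n n = 0 := by
  refine ⟨fun i hi => ?_, by simp [robustT, robustTAux]⟩
  rw [robustT, robustTAux_P2set hμ hs2 hL2μ hfeas, show n - i = n - 1 - i + 1 by omega,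
    pow_succ, div_pow, div_pow]
  field_simp
  ring

theorem stmt2 (n : ℕ) (μ L s2 : ℝ) (hμ : 0 < μ) (hL : 0 < L) (hs2 : 0 ≤ s2)
    (hL2μ : L ≤ 2 * μ) (hfeas : s2 ≤ μ * (L - μ)) :
    (∀ i : ℕ, i + 1 ≤ n →
      robustT (fun _ => P2set μ s2 L) n i
        = μ + s2 / μ * (1 - (s2 / (μ ^ 2 + s2)) ^ (n - 1 - i))) ∧
    robustT (fun _ => P2set μ s2 L) n n = 0 :=
  stmt2_general n μ L s2 hμ hs2 hL2μ hfeas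
end

section
/- Let μ, L > 0 and σ² ≥ 0 with L ≥ 2μ and σ² ≤ μ(L − μ). Then there exists n₀ ∈ ℕ with n₀ ≥ 3, depending only on μ, σ² and L, such that for every n ≥ n₀ the robust thresholds associated with 𝒫ᵢ = P₂(μ,σ²,L) for all i = 1,…,n satisfy: T(n) = 0; T(i) = L·(1 − (1 − μ/L)·((L−μ)²/((L−μ)² + σ²))^{n−1−i}) for n − n₀ + 1 ≤ i ≤ n − 1; and T(i) = μ + (σ²/μ)·(1 − (σ²/(μ² + σ²))^{n−n₀−i}) + T(n − n₀ + 1)·(σ²/(σ² + μ²))^{n−n₀+1−i} for 1 ≤ i ≤ n − n₀. -/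
open MeasureTheory

/-! For `μ ≤ t ≤ (μ² + σ²)/μ`, the infimum of `∫ max t x` over `P₂(μ,σ²,L)` is attained at one of
two extremal laws: the one with an atom at `0`, of value `μ + σ² t/(μ² + σ²)`, or the one with an
atom at `L`, of value `L - (L - t)(L - μ)²/((L - μ)² + σ²)`. Indeed, if the lower atom of a law lies
`u` below `μ`, the gain `∫ max t x - t` is at least a quasi-concave function of `u`, hence at least
its value at one of the endpoints `u = μ`, `u = σ²/(L - μ)` of the feasible range.

Both values are affine contractions in `t`, towards `(μ² + σ²)/μ` and towards `L`, with explicit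
geometric iterates, and their difference is monotone in `t`. The `L`-atom value is the smaller one
at `t = μ = T(n - 1)` (this is where `L ≥ 2μ` enters) and the `0`-atom value is the smaller one at
`(μ² + σ²)/μ`, which the `L`-contraction eventually passes. So, going backwards, the thresholds
follow the `L`-contraction until the first crossing and the other contraction from then on. -/

theorem Function.iterate_eq_iterate_of_eq_on_orbit {α : Type*} {F g : α → α} {x : α} {K : ℕ}
    (h : ∀ k < K, F (g^[k] x) = g (g^[k] x)) : ∀ k ≤ K, F^[k] x = g^[k] x := by
  intro k hk
  induction k with
  | zero => rfl
  | succ k ih =>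
    rw [Function.iterate_succ_apply', Function.iterate_succ_apply', ih (by omega), h k (by omega)]

theorem iterate_affine_contraction (c r x : ℝ) (k : ℕ) :
    (fun y => c - r * (c - y))^[k] x = c - r ^ k * (c - x) := by
  induction k with
  | zero => simp
  | succ k ih => rw [Function.iterate_succ_apply', ih]; ring

theorem integral_max_twoPoint {p : ℝ} (hp0 : 0 ≤ p) (hp1 : p ≤ 1) (a b t : ℝ) :
    ∫ x, max t x ∂(twoPoint p a b) = p * max t a + (1 - p) * max t b := by
  have hint (c : ℝ) : Integrable (fun x => max t x) (Measure.dirac c) :=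
    integrable_dirac enorm_lt_top
  rw [twoPoint, integral_add_measure ((hint a).smul_measure ENNReal.ofReal_ne_top)
      ((hint b).smul_measure ENNReal.ofReal_ne_top), integral_smul_measure, integral_smul_measure,
    integral_dirac, integral_dirac, ENNReal.toReal_ofReal hp0,
    ENNReal.toReal_ofReal (sub_nonneg.2 hp1), smul_eq_mul, smul_eq_mul]

noncomputable def robustStep (S : Set (Measure ℝ)) (t : ℝ) : ℝ :=
  sInf ((fun P => ∫ x, max t x ∂P) '' S)

theorem robustTAux_const (S : Set (Measure ℝ)) (n k : ℕ) :
    robustTAux (fun _ => S) n k = (robustStep S)^[k] 0 := by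
  induction k with
  | zero => rfl
  | succ k ih => rw [Function.iterate_succ_apply', ← ih]; rfl

theorem robustT_const_of_lt (S : Set (Measure ℝ)) {n i : ℕ} (hi : i < n) :
    robustT (fun _ => S) n i = (robustStep S)^[n - 1 - i] (robustStep S 0) := by
  rw [robustT, robustTAux_const, ← Function.iterate_succ_apply]
  congr 1
  omega

section ExtremalLaws

variable {μ s2 L : ℝ}

noncomputable def zeroAtomLaw (μ s2 : ℝ) : Measure ℝ :=
  twoPoint (s2 / (μ ^ 2 + s2)) 0 ((μ ^ 2 + s2) / μ)

noncomputable def topAtomLaw (μ s2 L : ℝ) : Measure ℝ :=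
  twoPoint ((L - μ) ^ 2 / ((L - μ) ^ 2 + s2)) (μ - s2 / (L - μ)) L

noncomputable def zeroAtomValue (μ s2 t : ℝ) : ℝ :=
  μ + s2 / (μ ^ 2 + s2) * t

noncomputable def topAtomValue (μ s2 L t : ℝ) : ℝ :=
  L - (L - t) * ((L - μ) ^ 2 / ((L - μ) ^ 2 + s2))

theorem zeroAtomLaw_mem_P2set (hμ : 0 < μ) (hs2 : 0 ≤ s2) (hfeas : s2 ≤ μ * (L - μ)) :
    zeroAtomLaw μ s2 ∈ P2set μ s2 L := by
  have hden : 0 < μ ^ 2 + s2 := by positivity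
  refine ⟨_, _, _, le_rfl, by positivity, ?_, by positivity, ?_, ?_, ?_, rfl⟩
  · rw [div_le_iff₀ hμ]; nlinarith
  · rw [div_le_one hden]; nlinarith
  · field_simp; ring
  · field_simp; ring

theorem topAtomLaw_mem_P2set (hμL : μ < L) (hs2 : 0 ≤ s2) (hfeas : s2 ≤ μ * (L - μ)) :
    topAtomLaw μ s2 L ∈ P2set μ s2 L := by
  have hLμ : 0 < L - μ := sub_pos.2 hμL
  have hden : 0 < (L - μ) ^ 2 + s2 := by positivity
  refine ⟨_, _, _, ?_, ?_, le_rfl, by positivity, ?_, ?_, ?_, rfl⟩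
  · rw [sub_nonneg, div_le_iff₀ hLμ]; linarith
  · have : 0 ≤ s2 / (L - μ) := by positivity
    linarith
  · rw [div_le_one hden]; nlinarith
  · field_simp; ring
  · field_simp; ring

theorem integral_max_zeroAtomLaw (hμ : 0 < μ) (hs2 : 0 ≤ s2) {t : ℝ} (ht0 : 0 ≤ t)
    (ht : t ≤ (μ ^ 2 + s2) / μ) :
    ∫ x, max t x ∂(zeroAtomLaw μ s2) = zeroAtomValue μ s2 t := by
  have hden : 0 < μ ^ 2 + s2 := by positivity
  rw [zeroAtomLaw, integral_max_twoPoint (by positivity) ((div_le_one hden).2 (by nlinarith)),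
    max_eq_left ht0, max_eq_right ht, zeroAtomValue]
  field_simp
  ring

theorem integral_max_topAtomLaw (hμL : μ < L) (hs2 : 0 ≤ s2) {t : ℝ} (hμt : μ ≤ t)
    (htL : t ≤ L) :
    ∫ x, max t x ∂(topAtomLaw μ s2 L) = topAtomValue μ s2 L t := by
  have hden : 0 < (L - μ) ^ 2 + s2 := by nlinarith [sub_pos.2 hμL]
  have hat : μ - s2 / (L - μ) ≤ t := by
    have : 0 ≤ s2 / (L - μ) := div_nonneg hs2 (sub_pos.2 hμL).le
    linarith
  rw [topAtomLaw, integral_max_twoPoint (by positivity) ((div_le_one hden).2 (by nlinarith)),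
    max_eq_left hat, max_eq_right htL, topAtomValue]
  ring

end ExtremalLaws

/-- If the lower atom `a` of `p • δ_a + (1 - p) • δ_b ∈ P₂(μ,σ²,L)` lies `u` below `μ` and
`d = t - μ`, then `excess s2 d u = (1 - p) * (b - t)`, a lower bound for `∫ max t x - t`. -/
noncomputable def excess (s2 d u : ℝ) : ℝ :=
  u * (s2 - u * d) / (u ^ 2 + s2)

section Excess

variable {s2 d : ℝ}

theorem excess_mul (hs2 : 0 ≤ s2) (u : ℝ) : excess s2 d u * (u ^ 2 + s2) = u * (s2 - u * d) := by
  rcases (add_nonneg (sq_nonneg u) hs2).eq_or_lt with h | h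
  · have hu : u = 0 := by nlinarith
    simp [hu, excess]
  · exact div_mul_cancel₀ _ h.ne'

theorem neg_le_excess (hs2 : 0 ≤ s2) (hd : 0 ≤ d) (u : ℝ) (hu : 0 ≤ u) : -d ≤ excess s2 d u := by
  rcases (add_nonneg (sq_nonneg u) hs2).eq_or_lt with h | h
  · have hu : u = 0 := by nlinarith
    simp [hu, excess, hd]
  · rw [excess, le_div_iff₀ h]
    nlinarith [mul_nonneg hs2 (add_nonneg hu hd)]

/-- `excess s2 d` is quasi-concave on `[0, ∞)`: the superlevel set `{excess ≥ c}` with `c ≥ -d`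
is where the concave quadratic `u (s2 - u d) - c (u² + s2)` is nonnegative. -/
theorem min_excess_le_excess (hs2 : 0 ≤ s2) (hd : 0 ≤ d) {u₁ u u₂ : ℝ} (hu₁ : 0 ≤ u₁)
    (h₁ : u₁ ≤ u) (h₂ : u ≤ u₂) :
    min (excess s2 d u₁) (excess s2 d u₂) ≤ excess s2 d u := by
  rcases h₁.eq_or_lt with rfl | h₁
  · exact min_le_left _ _
  set c := min (excess s2 d u₁) (excess s2 d u₂)
  set Q : ℝ → ℝ := fun x => x * (s2 - x * d) - c * (x ^ 2 + s2) with hQ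
  have hQ_eq (x : ℝ) : Q x = (x ^ 2 + s2) * (excess s2 d x - c) := by
    simp only [hQ]; linear_combination -(excess_mul (d := d) hs2 x)
  have hQ₁ : 0 ≤ Q u₁ := by
    rw [hQ_eq]; exact mul_nonneg (by positivity) (sub_nonneg.2 (min_le_left _ _))
  have hQ₂ : 0 ≤ Q u₂ := by
    rw [hQ_eq]; exact mul_nonneg (by positivity) (sub_nonneg.2 (min_le_right _ _))
  have hc : 0 ≤ d + c := by
    have := le_min (neg_le_excess hs2 hd u₁ hu₁) (neg_le_excess hs2 hd u₂ (by linarith))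
    linarith
  have hchord : (u₂ - u₁) * Q u
      = (u₂ - u) * Q u₁ + (u - u₁) * Q u₂ + (u₂ - u₁) * ((d + c) * ((u - u₁) * (u₂ - u))) := by
    simp only [hQ]; ring
  have hQu : 0 ≤ Q u := by
    refine (mul_nonneg_iff_of_pos_left (sub_pos.2 (h₁.trans_le h₂))).1 ?_
    rw [hchord]
    have := mul_nonneg hc (mul_nonneg (sub_nonneg.2 h₁.le) (sub_nonneg.2 h₂))
    have := mul_nonneg (sub_nonneg.2 h₂) hQ₁
    have := mul_nonneg (sub_nonneg.2 h₁.le) hQ₂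
    have := mul_nonneg (sub_nonneg.2 (h₁.trans_le h₂).le) ‹0 ≤ (d + c) * _›
    linarith
  rw [hQ_eq] at hQu
  have hpos : 0 < u ^ 2 + s2 := by nlinarith
  linarith [(mul_nonneg_iff_of_pos_left hpos).1 hQu]

end Excess

noncomputable def extremalStep (μ s2 L t : ℝ) : ℝ :=
  min (zeroAtomValue μ s2 t) (topAtomValue μ s2 L t)

section RobustStep

variable {μ s2 L : ℝ}

theorem zeroAtomValue_eq_add_excess (hμ : 0 < μ) (hs2 : 0 ≤ s2) (t : ℝ) :
    zeroAtomValue μ s2 t = t + excess s2 (t - μ) μ := by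
  have hden : 0 < μ ^ 2 + s2 := by positivity
  rw [zeroAtomValue, excess]
  field_simp
  ring

theorem topAtomValue_eq_add_excess (hμL : μ < L) (hs2 : 0 ≤ s2) (t : ℝ) :
    topAtomValue μ s2 L t = t + excess s2 (t - μ) (s2 / (L - μ)) := by
  have hLμ : 0 < L - μ := sub_pos.2 hμL
  rw [topAtomValue, excess]
  rcases hs2.eq_or_lt with rfl | hs2 <;>
  · field_simp
    ring

theorem min_le_integral_max_of_mem_P2set (hμ : 0 < μ) (hμL : μ < L) (hs2 : 0 ≤ s2)
    {P : Measure ℝ} (hP : P ∈ P2set μ s2 L) {t : ℝ} (hμt : μ ≤ t) :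
    min (zeroAtomValue μ s2 t) (topAtomValue μ s2 L t) ≤ ∫ x, max t x ∂P := by
  obtain ⟨p, a, b, ha, hab, hbL, hp0, hp1, hmean, hsec, rfl⟩ := hP
  have hweight : (1 - p) * (b - a) = μ - a := by linear_combination hmean
  have hgap : (μ - a) * (b - μ) = s2 := by linear_combination hsec - (a + b) * hmean
  have haμ : a ≤ μ := by nlinarith [mul_nonneg (sub_nonneg.2 hp1) (sub_nonneg.2 hab)]
  have hμb : μ ≤ b := by nlinarith [mul_nonneg hp0 (sub_nonneg.2 hab)]
  have hgain : t + excess s2 (t - μ) (μ - a) ≤ p * max t a + (1 - p) * max t b := by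
    have hexcess : excess s2 (t - μ) (μ - a) ≤ (1 - p) * (max t b - t) := by
      rcases haμ.eq_or_lt with rfl | hlt
      · simp only [excess, sub_self, zero_mul, zero_div]
        exact mul_nonneg (sub_nonneg.2 hp1) (by linarith [le_max_left t b])
      · have hid : (μ - a) * (s2 - (μ - a) * (t - μ))
            = (1 - p) * (b - t) * ((μ - a) ^ 2 + s2) := by
          linear_combination (-(b - t) * (μ - a)) * hweight
            + ((1 - p) * (b - t) - (μ - a)) * hgap
        rw [excess, div_eq_of_eq_mul (by nlinarith) hid]
        exact mul_le_mul_of_nonneg_left (by linarith [le_max_right t b]) (sub_nonneg.2 hp1)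
    rw [max_eq_left (haμ.trans hμt)]
    linarith
  have hsandwich := min_excess_le_excess hs2 (sub_nonneg.2 hμt)
    (div_nonneg hs2 (sub_pos.2 hμL).le) (u := μ - a) (u₂ := μ)
    (by rw [div_le_iff₀ (sub_pos.2 hμL)]; nlinarith) (by linarith)
  rw [integral_max_twoPoint hp0 hp1, zeroAtomValue_eq_add_excess hμ hs2,
    topAtomValue_eq_add_excess hμL hs2, min_add_add_left]
  linarith [min_comm (excess s2 (t - μ) (s2 / (L - μ))) (excess s2 (t - μ) μ)]

theorem robustStep_P2set_zero (hμ : 0 < μ) (hs2 : 0 ≤ s2) (hfeas : s2 ≤ μ * (L - μ)) :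
    robustStep (P2set μ s2 L) 0 = μ := by
  have hconst : ∀ P ∈ P2set μ s2 L, ∫ x, max 0 x ∂P = μ := by
    rintro _ ⟨p, a, b, ha, hab, -, hp0, hp1, hmean, -, rfl⟩
    rw [integral_max_twoPoint hp0 hp1, max_eq_right ha, max_eq_right (ha.trans hab), hmean]
  rw [robustStep, Set.image_congr hconst,
    Set.Nonempty.image_const ⟨_, zeroAtomLaw_mem_P2set hμ hs2 hfeas⟩, csInf_singleton]

theorem robustStep_P2set (hμ : 0 < μ) (hμL : μ < L) (hs2 : 0 ≤ s2) (hfeas : s2 ≤ μ * (L - μ))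
    {t : ℝ} (ht : t ∈ Set.Icc μ ((μ ^ 2 + s2) / μ)) :
    robustStep (P2set μ s2 L) t = extremalStep μ s2 L t := by
  have htL : t ≤ L := ht.2.trans ((div_le_iff₀ hμ).2 (by nlinarith))
  have hlower : ∀ y ∈ (fun P => ∫ x, max t x ∂P) '' P2set μ s2 L,
      min (zeroAtomValue μ s2 t) (topAtomValue μ s2 L t) ≤ y :=
    Set.forall_mem_image.2 fun _ hP => min_le_integral_max_of_mem_P2set hμ hμL hs2 hP ht.1
  have hzero := Set.mem_image_of_mem (fun P => ∫ x, max t x ∂P) (zeroAtomLaw_mem_P2set hμ hs2 hfeas)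
  have htop := Set.mem_image_of_mem (fun P => ∫ x, max t x ∂P) (topAtomLaw_mem_P2set hμL hs2 hfeas)
  refine le_antisymm (le_min ?_ ?_) (le_csInf ⟨_, hzero⟩ hlower)
  · rw [← integral_max_zeroAtomLaw hμ hs2 (hμ.le.trans ht.1) ht.2]
    exact csInf_le ⟨_, hlower⟩ hzero
  · rw [← integral_max_topAtomLaw hμL hs2 ht.1 htL]
    exact csInf_le ⟨_, hlower⟩ htop

end RobustStep

section Dynamics

variable {μ s2 L : ℝ}

theorem zeroAtomValue_eq_contraction (hμ : 0 < μ) (hs2 : 0 ≤ s2) :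
    zeroAtomValue μ s2
      = fun y => (μ ^ 2 + s2) / μ - s2 / (μ ^ 2 + s2) * ((μ ^ 2 + s2) / μ - y) := by
  have hden : 0 < μ ^ 2 + s2 := by positivity
  funext y
  rw [zeroAtomValue]
  field_simp
  ring

theorem zeroAtomValue_iterate (hμ : 0 < μ) (hs2 : 0 ≤ s2) (k : ℕ) (x : ℝ) :
    (zeroAtomValue μ s2)^[k] x
      = (μ ^ 2 + s2) / μ - (s2 / (μ ^ 2 + s2)) ^ k * ((μ ^ 2 + s2) / μ - x) := by
  rw [zeroAtomValue_eq_contraction hμ hs2, iterate_affine_contraction]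

theorem topAtomValue_iterate (k : ℕ) (x : ℝ) :
    (topAtomValue μ s2 L)^[k] x = L - ((L - μ) ^ 2 / ((L - μ) ^ 2 + s2)) ^ k * (L - x) := by
  have hcontr : topAtomValue μ s2 L = fun y => L - (L - μ) ^ 2 / ((L - μ) ^ 2 + s2) * (L - y) := by
    funext y
    rw [topAtomValue]
    ring
  rw [hcontr, iterate_affine_contraction]

theorem zeroAtomValue_mono (hs2 : 0 ≤ s2) : Monotone (zeroAtomValue μ s2) := fun x y hxy => by
  have : 0 ≤ s2 / (μ ^ 2 + s2) := by positivity
  simp only [zeroAtomValue]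
  gcongr

theorem topAtomValue_mono (hs2 : 0 ≤ s2) : Monotone (topAtomValue μ s2 L) := fun x y hxy => by
  have : 0 ≤ (L - μ) ^ 2 / ((L - μ) ^ 2 + s2) := by positivity
  simp only [topAtomValue]
  gcongr

theorem le_zeroAtomValue (hμ : 0 < μ) (hs2 : 0 ≤ s2) {x : ℝ} (hx : x ≤ (μ ^ 2 + s2) / μ) :
    x ≤ zeroAtomValue μ s2 x := by
  have hq : s2 / (μ ^ 2 + s2) ≤ 1 := (div_le_one (by positivity)).2 (by nlinarith)
  rw [zeroAtomValue_eq_contraction hμ hs2]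
  nlinarith [mul_nonneg (sub_nonneg.2 hq) (sub_nonneg.2 hx)]

theorem le_topAtomValue (hs2 : 0 ≤ s2) {x : ℝ} (hxL : x ≤ L) : x ≤ topAtomValue μ s2 L x := by
  have hr : (L - μ) ^ 2 / ((L - μ) ^ 2 + s2) ≤ 1 :=
    div_le_one_of_le₀ (by linarith) (add_nonneg (sq_nonneg _) hs2)
  rw [topAtomValue]
  nlinarith [mul_nonneg (sub_nonneg.2 hr) (sub_nonneg.2 hxL)]

theorem mapsTo_extremalStep (hμ : 0 < μ) (hs2 : 0 ≤ s2) (hfeas : s2 ≤ μ * (L - μ)) :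
    Set.MapsTo (extremalStep μ s2 L) (Set.Icc μ ((μ ^ 2 + s2) / μ))
      (Set.Icc μ ((μ ^ 2 + s2) / μ)) := by
  have hfix : (μ ^ 2 + s2) / μ ≤ L := (div_le_iff₀ hμ).2 (by nlinarith)
  rintro t ⟨hμt, htfix⟩
  have hzero : μ ≤ zeroAtomValue μ s2 t := by
    have : 0 ≤ s2 / (μ ^ 2 + s2) * t := mul_nonneg (by positivity) (by linarith)
    rw [zeroAtomValue]
    linarith
  have hfixed : zeroAtomValue μ s2 ((μ ^ 2 + s2) / μ) = (μ ^ 2 + s2) / μ := by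
    rw [zeroAtomValue_eq_contraction hμ hs2]
    ring
  refine ⟨le_min hzero (hμt.trans (le_topAtomValue hs2 (htfix.trans hfix))), ?_⟩
  exact (min_le_left _ _).trans (hfixed ▸ zeroAtomValue_mono hs2 htfix)

theorem zeroAtomValue_le_topAtomValue_of_le (hμ : 0 < μ) (hμL : μ < L) (hs2 : 0 ≤ s2)
    (hfeas : s2 ≤ μ * (L - μ)) {x y : ℝ} (hxy : x ≤ y)
    (hx : zeroAtomValue μ s2 x ≤ topAtomValue μ s2 L x) :
    zeroAtomValue μ s2 y ≤ topAtomValue μ s2 L y := by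
  have hslopes : s2 / (μ ^ 2 + s2) ≤ (L - μ) ^ 2 / ((L - μ) ^ 2 + s2) := by
    rw [div_le_div_iff₀ (by positivity) (by nlinarith [sub_pos.2 hμL])]
    nlinarith [mul_le_mul hfeas hfeas hs2 (hs2.trans hfeas)]
  simp only [zeroAtomValue, topAtomValue] at hx ⊢
  nlinarith [mul_le_mul_of_nonneg_right hslopes (sub_nonneg.2 hxy)]

theorem topAtomValue_le_zeroAtomValue_mean (hμ : 0 < μ) (hs2 : 0 ≤ s2) (h2μ : 2 * μ ≤ L)
    (hfeas : s2 ≤ μ * (L - μ)) :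
    topAtomValue μ s2 L μ ≤ zeroAtomValue μ s2 μ := by
  have hD : 0 < (L - μ) ^ 2 + s2 := by nlinarith
  have hq : 0 < μ ^ 2 + s2 := by positivity
  have hden : 0 < ((L - μ) ^ 2 + s2) * (μ ^ 2 + s2) := mul_pos hD hq
  have hgap : zeroAtomValue μ s2 μ - topAtomValue μ s2 L μ
      = s2 * (L - 2 * μ) * (μ * (L - μ) - s2) / (((L - μ) ^ 2 + s2) * (μ ^ 2 + s2)) := by
    rw [zeroAtomValue, topAtomValue]
    field_simp
    ring
  have : 0 ≤ zeroAtomValue μ s2 μ - topAtomValue μ s2 L μ := by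
    rw [hgap]
    exact div_nonneg (mul_nonneg (mul_nonneg hs2 (by linarith)) (by linarith)) hden.le
  linarith

end Dynamics

section Phases

variable {μ s2 L : ℝ}

theorem exists_zeroAtomValue_le_topAtomValue_iterate (hμ : 0 < μ) (hμL : μ < L) (hs2 : 0 ≤ s2)
    (hfeas : s2 ≤ μ * (L - μ)) :
    ∃ k, zeroAtomValue μ s2 ((topAtomValue μ s2 L)^[k] μ)
      ≤ topAtomValue μ s2 L ((topAtomValue μ s2 L)^[k] μ) := by
  rcases hfeas.lt_or_eq with hlt | rfl
  · have hfixL : (μ ^ 2 + s2) / μ < L := (div_lt_iff₀ hμ).2 (by nlinarith)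
    have hfix : zeroAtomValue μ s2 ((μ ^ 2 + s2) / μ) ≤ topAtomValue μ s2 L ((μ ^ 2 + s2) / μ) :=
      calc zeroAtomValue μ s2 ((μ ^ 2 + s2) / μ) = (μ ^ 2 + s2) / μ := by
            rw [zeroAtomValue_eq_contraction hμ hs2]; ring
        _ ≤ _ := le_topAtomValue hs2 hfixL.le
    -- the iterates of `topAtomValue` climb to `L`, past the fixed point of `zeroAtomValue`
    obtain ⟨k, hk⟩ : ∃ k, (μ ^ 2 + s2) / μ ≤ (topAtomValue μ s2 L)^[k] μ := by
      simp only [topAtomValue_iterate]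
      rcases hs2.eq_or_lt with rfl | hs2
      · exact ⟨0, by field_simp; nlinarith⟩
      · have hr : (L - μ) ^ 2 / ((L - μ) ^ 2 + s2) < 1 :=
          (div_lt_one (by positivity)).2 (by linarith)
        obtain ⟨k, hk⟩ := exists_pow_lt_of_lt_one
          (div_pos (sub_pos.2 hfixL) (sub_pos.2 hμL)) hr
        rw [lt_div_iff₀ (sub_pos.2 hμL)] at hk
        exact ⟨k, by linarith⟩
    exact ⟨k, zeroAtomValue_le_topAtomValue_of_le hμ hμL hs2 hfeas hk hfix⟩
  · -- for `σ² = μ(L - μ)` the two values coincide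
    refine ⟨0, le_of_eq ?_⟩
    have hLμ : 0 < L - μ := sub_pos.2 hμL
    rw [Function.iterate_zero_apply, zeroAtomValue, topAtomValue]
    field_simp
    ring

theorem extremalStep_iterate_phases (hμ : 0 < μ) (hs2 : 0 ≤ s2) (h2μ : 2 * μ ≤ L)
    (hfeas : s2 ≤ μ * (L - μ)) :
    ∃ K, 1 ≤ K ∧ (∀ k ≤ K, (extremalStep μ s2 L)^[k] μ = (topAtomValue μ s2 L)^[k] μ) ∧
      ∀ j, (extremalStep μ s2 L)^[j + K] μ
        = (zeroAtomValue μ s2)^[j] ((topAtomValue μ s2 L)^[K] μ) := by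
  classical
  have hμL : μ < L := by linarith
  have hμfix : μ ≤ (μ ^ 2 + s2) / μ := (le_div_iff₀ hμ).2 (by nlinarith)
  have hclimb : Monotone fun k => (topAtomValue μ s2 L)^[k] μ :=
    (topAtomValue_mono hs2).monotone_iterate_of_le_map (le_topAtomValue hs2 hμL.le)
  obtain ⟨k, hk⟩ := exists_zeroAtomValue_le_topAtomValue_iterate hμ hμL hs2 hfeas
  have hcross : ∃ K, 1 ≤ K ∧ zeroAtomValue μ s2 ((topAtomValue μ s2 L)^[K] μ)
      ≤ topAtomValue μ s2 L ((topAtomValue μ s2 L)^[K] μ) :=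
    ⟨k + 1, le_add_self, zeroAtomValue_le_topAtomValue_of_le hμ hμL hs2 hfeas
      (hclimb k.le_succ) hk⟩
  obtain ⟨hK1, hK⟩ := Nat.find_spec hcross
  have htop : ∀ k ≤ Nat.find hcross,
      (extremalStep μ s2 L)^[k] μ = (topAtomValue μ s2 L)^[k] μ := by
    refine Function.iterate_eq_iterate_of_eq_on_orbit fun k hk => min_eq_right ?_
    rcases Nat.eq_zero_or_pos k with rfl | hk0
    · exact topAtomValue_le_zeroAtomValue_mean hμ hs2 h2μ hfeas
    · have := Nat.find_min hcross hk
      push Not at this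
      exact (this hk0).le
  refine ⟨Nat.find hcross, hK1, htop, fun j => ?_⟩
  have hy : (topAtomValue μ s2 L)^[Nat.find hcross] μ ∈ Set.Icc μ ((μ ^ 2 + s2) / μ) := by
    rw [← htop _ le_rfl]
    exact (mapsTo_extremalStep hμ hs2 hfeas).iterate _ ⟨le_rfl, hμfix⟩
  set y := (topAtomValue μ s2 L)^[Nat.find hcross] μ
  have hrise : Monotone fun j => (zeroAtomValue μ s2)^[j] y :=
    (zeroAtomValue_mono hs2).monotone_iterate_of_le_map (le_zeroAtomValue hμ hs2 hy.2)
  rw [Function.iterate_add_apply, htop _ le_rfl]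
  refine Function.iterate_eq_iterate_of_eq_on_orbit (K := j) (fun i _ => min_eq_left ?_) j le_rfl
  exact zeroAtomValue_le_topAtomValue_of_le hμ hμL hs2 hfeas (hrise (Nat.zero_le i)) hK

theorem robustT_P2set_of_lt (hμ : 0 < μ) (hμL : μ < L) (hs2 : 0 ≤ s2)
    (hfeas : s2 ≤ μ * (L - μ)) {n i : ℕ} (hi : i < n) :
    robustT (fun _ => P2set μ s2 L) n i = (extremalStep μ s2 L)^[n - 1 - i] μ := by
  rw [robustT_const_of_lt _ hi, robustStep_P2set_zero hμ hs2 hfeas]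
  refine Function.iterate_eq_iterate_of_eq_on_orbit (fun k _ => ?_) _ le_rfl
  exact robustStep_P2set hμ hμL hs2 hfeas
    ((mapsTo_extremalStep hμ hs2 hfeas).iterate k ⟨le_rfl, (le_div_iff₀ hμ).2 (by nlinarith)⟩)

end Phases

theorem stmt3_general (μ L s2 : ℝ) (hμ : 0 < μ) (hs2 : 0 ≤ s2)
    (h2μ : 2 * μ ≤ L) (hfeas : s2 ≤ μ * (L - μ)) :
    ∃ n₀ : ℕ, 3 ≤ n₀ ∧ ∀ n : ℕ, n₀ ≤ n →
      (robustT (fun _ => P2set μ s2 L) n n = 0) ∧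
      (∀ i : ℕ, n - n₀ + 1 ≤ i → i ≤ n - 1 →
        robustT (fun _ => P2set μ s2 L) n i
          = L * (1 - (1 - μ / L) * ((L - μ) ^ 2 / ((L - μ) ^ 2 + s2)) ^ (n - 1 - i))) ∧
      (∀ i : ℕ, 1 ≤ i → i ≤ n - n₀ →
        robustT (fun _ => P2set μ s2 L) n i
          = μ + s2 / μ * (1 - (s2 / (μ ^ 2 + s2)) ^ (n - n₀ - i))
            + robustT (fun _ => P2set μ s2 L) n (n - n₀ + 1)
              * (s2 / (s2 + μ ^ 2)) ^ (n - n₀ + 1 - i)) := by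
  have hμL : μ < L := by linarith
  have hL : 0 < L := by linarith
  have hden : 0 < μ ^ 2 + s2 := by positivity
  obtain ⟨K, hK1, hearly, hlate⟩ := extremalStep_iterate_phases hμ hs2 h2μ hfeas
  refine ⟨K + 2, by omega, fun n hn => ⟨by rw [robustT, Nat.sub_self]; rfl, ?_, ?_⟩⟩
  · intro i hi₁ hi₂
    rw [robustT_P2set_of_lt hμ hμL hs2 hfeas (by omega), hearly _ (by omega), topAtomValue_iterate]
    generalize ((L - μ) ^ 2 / ((L - μ) ^ 2 + s2)) ^ (n - 1 - i) = x
    field_simp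
  · intro i hi₁ hi₂
    have hsplit : n - 1 - i = (n - (K + 2) - i + 1) + K := by omega
    rw [robustT_P2set_of_lt hμ hμL hs2 hfeas (by omega), robustT_P2set_of_lt hμ hμL hs2 hfeas
      (by omega), hsplit, hlate, show n - 1 - (n - (K + 2) + 1) = K by omega, hearly K le_rfl,
      zeroAtomValue_iterate hμ hs2, show n - (K + 2) + 1 - i = n - (K + 2) - i + 1 by omega,
      add_comm s2, pow_succ (s2 / (μ ^ 2 + s2))]
    generalize (s2 / (μ ^ 2 + s2)) ^ (n - (K + 2) - i) = x
    field_simp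
    ring

theorem stmt3 (μ L s2 : ℝ) (hμ : 0 < μ) (hL : 0 < L) (hs2 : 0 ≤ s2)
    (h2μ : 2 * μ ≤ L) (hfeas : s2 ≤ μ * (L - μ)) :
    ∃ n₀ : ℕ, 3 ≤ n₀ ∧ ∀ n : ℕ, n₀ ≤ n →
      (robustT (fun _ => P2set μ s2 L) n n = 0) ∧
      (∀ i : ℕ, n - n₀ + 1 ≤ i → i ≤ n - 1 →
        robustT (fun _ => P2set μ s2 L) n i
          = L * (1 - (1 - μ / L) * ((L - μ) ^ 2 / ((L - μ) ^ 2 + s2)) ^ (n - 1 - i))) ∧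
      (∀ i : ℕ, 1 ≤ i → i ≤ n - n₀ →
        robustT (fun _ => P2set μ s2 L) n i
          = μ + s2 / μ * (1 - (s2 / (μ ^ 2 + s2)) ^ (n - n₀ - i))
            + robustT (fun _ => P2set μ s2 L) n (n - n₀ + 1)
              * (s2 / (s2 + μ ^ 2)) ^ (n - n₀ + 1 - i)) :=
  stmt3_general μ L s2 hμ hs2 h2μ hfeas
end

section
/- Let n ∈ ℕ, let 0 < μ < L and 0 ≤ σ² ≤ μ(L − μ). Take 𝒫ᵢ = P(μ,σ²,L) for all i = 1,…,n. Then the robust thresholds satisfy T(i) = μ + (σ²/μ)·(1 − (1 − μ/L)^{n−1−i}) for every i with 0 ≤ i ≤ n − 1, and T(n) = 0. -/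
/-!
On `[0, L]` one has `max t x ≥ t + x (x - t) / L`, with equality exactly at `x ∈ {0, t, L}`.
Integrating against `P ∈ P(μ,σ²,L)` gives `∫ max t x dP ≥ t + (μ² + σ² - t μ) / L`, and for
`μ ≤ t < L` with `μ t ≤ μ² + σ²` there is a measure supported on `{0, t, L}` with the prescribed
moments, so the bound is the infimum. The step `t ↦ t + (μ² + σ² - t μ) / L` is affine with slope
`1 - μ / L`; started from `T(n-1) = ∫ x dP = μ`, it produces the closed form, which stays in the
range `[μ, L)` where the three-point measure exists.
-/

open MeasureTheory

/-- `P(μ,σ²,L)`: Borel probability measures supported in `[0,L]` with mean `μ`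
and second moment `μ² + σ²`. -/
def PmvL (μ s2 L : ℝ) : Set (Measure ℝ) :=
  {P | IsProbabilityMeasure P ∧ P (Set.Icc 0 L) = 1 ∧
       (∫ x, x ∂P) = μ ∧ (∫ x, x ^ 2 ∂P) = μ ^ 2 + s2}

section FiniteSupport

variable {ι : Type*} [Fintype ι] (w x : ι → ℝ)

lemma integral_sum_smul_dirac (hw : ∀ i, 0 ≤ w i) (f : ℝ → ℝ) :
    ∫ y, f y ∂(∑ i, ENNReal.ofReal (w i) • Measure.dirac (x i)) = ∑ i, w i * f (x i) := by
  rw [integral_finsetSum_measure fun i _ =>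
    (integrable_dirac enorm_lt_top).smul_measure ENNReal.ofReal_ne_top]
  simp [integral_smul_measure, ENNReal.toReal_ofReal (hw _)]

lemma sum_smul_dirac_apply_of_forall_mem (hw : ∀ i, 0 ≤ w i) {s : Set ℝ} (hs : ∀ i, x i ∈ s) :
    (∑ i, ENNReal.ofReal (w i) • Measure.dirac (x i)) s = ENNReal.ofReal (∑ i, w i) := by
  simp [Measure.dirac_apply_of_mem (hs _), ENNReal.ofReal_sum_of_nonneg fun i _ => hw i]

end FiniteSupport

section PmvL

variable {μ s2 L : ℝ} {P : Measure ℝ}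

lemma ae_mem_Icc_of_mem_PmvL (hP : P ∈ PmvL μ s2 L) : ∀ᵐ x ∂P, x ∈ Set.Icc 0 L := by
  obtain ⟨_, hIcc, -⟩ := hP
  rw [ae_iff, ← Set.compl_def, prob_compl_eq_zero_iff measurableSet_Icc]
  exact hIcc

lemma integrable_of_mem_PmvL (hP : P ∈ PmvL μ s2 L) {f : ℝ → ℝ} (hf : Continuous f) :
    Integrable f P := by
  have := hP.1
  rw [← Measure.restrict_eq_self_of_ae_mem (ae_mem_Icc_of_mem_PmvL hP)]
  exact hf.continuousOn.integrableOn_compact isCompact_Icc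

lemma add_div_le_max_of_mem_Icc {t x : ℝ} (hL : 0 < L) (hx : x ∈ Set.Icc 0 L) :
    t + (x ^ 2 - t * x) / L ≤ max t x := by
  obtain ⟨hx0, hxL⟩ := hx
  rcases le_total x t with hxt | htx
  · have : (x ^ 2 - t * x) / L ≤ 0 :=
      div_nonpos_of_nonpos_of_nonneg (by nlinarith) hL.le
    linarith [le_max_left t x]
  · have : (x ^ 2 - t * x) / L ≤ x - t := by
      rw [div_le_iff₀ hL]; nlinarith
    linarith [le_max_right t x]

lemma le_integral_max_of_mem_PmvL (hL : 0 < L) (t : ℝ) (hP : P ∈ PmvL μ s2 L) :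
    t + (μ ^ 2 + s2 - t * μ) / L ≤ ∫ x, max t x ∂P := by
  have := hP.1
  have hint : ∀ {f : ℝ → ℝ}, Continuous f → Integrable f P := integrable_of_mem_PmvL hP
  have hquad : ∫ x, t + (x ^ 2 - t * x) / L ∂P = t + (μ ^ 2 + s2 - t * μ) / L := by
    rw [integral_add (integrable_const t) ((hint (by fun_prop)).div_const L), integral_const,
      probReal_univ, one_smul, integral_div,
      integral_sub (hint (continuous_pow 2)) ((hint continuous_id').const_mul t),
      integral_const_mul, hP.2.2.1, hP.2.2.2]
  rw [← hquad]
  refine integral_mono_ae (hint (by fun_prop)) (hint (by fun_prop)) ?_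
  filter_upwards [ae_mem_Icc_of_mem_PmvL hP] with x hx using add_div_le_max_of_mem_Icc hL hx

lemma exists_mem_PmvL_integral_max_eq {t : ℝ} (hμ : 0 < μ) (hfeas : s2 ≤ μ * (L - μ))
    (hμt : μ ≤ t) (hts : μ * t ≤ μ ^ 2 + s2) (htL : t < L) :
    ∃ P ∈ PmvL μ s2 L, ∫ x, max t x ∂P = t + (μ ^ 2 + s2 - t * μ) / L := by
  have ht : 0 < t := hμ.trans_le hμt
  have hL : 0 < L := ht.trans htL
  have hLt : 0 < L - t := sub_pos.2 htL
  have hs2 : 0 ≤ s2 := by nlinarith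
  -- weights solving the moment equations for a measure on `{0, t, L}`
  let w : Fin 3 → ℝ := ![((L - μ) * (t - μ) + s2) / (t * L), (μ * (L - μ) - s2) / (t * (L - t)),
    (μ ^ 2 + s2 - t * μ) / (L * (L - t))]
  let x : Fin 3 → ℝ := ![0, t, L]
  have hw : ∀ i, 0 ≤ w i := by
    intro i
    fin_cases i <;> apply div_nonneg <;> nlinarith
  have hw_sum : ∑ i, w i = 1 := by
    simp only [w, Fin.sum_univ_three, Matrix.cons_val_zero, Matrix.cons_val_one, Matrix.cons_val]
    field_simp
    ring
  have hx : ∀ i, x i ∈ Set.Icc 0 L := by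
    intro i; fin_cases i <;> simp [x, hL.le, ht.le, htL.le]
  let P := ∑ i, ENNReal.ofReal (w i) • Measure.dirac (x i)
  have hP_apply : ∀ {s : Set ℝ}, (∀ i, x i ∈ s) → P s = 1 := fun hs => by
    rw [sum_smul_dirac_apply_of_forall_mem w x hw hs, hw_sum, ENNReal.ofReal_one]
  refine ⟨P, ⟨⟨hP_apply fun _ => Set.mem_univ _⟩, hP_apply hx, ?_, ?_⟩, ?_⟩
  all_goals
    rw [integral_sum_smul_dirac w x hw]
    simp only [w, x, Fin.sum_univ_three, Matrix.cons_val_zero, Matrix.cons_val_one,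
      Matrix.cons_val]
  · field_simp; ring
  · field_simp; ring
  · rw [max_eq_left ht.le, max_self, max_eq_right htL.le]
    field_simp; ring

lemma isLeast_integral_max_PmvL {t : ℝ} (hμ : 0 < μ) (hfeas : s2 ≤ μ * (L - μ))
    (hμt : μ ≤ t) (hts : μ * t ≤ μ ^ 2 + s2) (htL : t < L) :
    IsLeast ((fun P => ∫ x, max t x ∂P) '' PmvL μ s2 L) (t + (μ ^ 2 + s2 - t * μ) / L) := by
  obtain ⟨P, hP, hPt⟩ := exists_mem_PmvL_integral_max_eq hμ hfeas hμt hts htL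
  refine ⟨⟨P, hP, hPt⟩, ?_⟩
  rintro _ ⟨Q, hQ, rfl⟩
  exact le_integral_max_of_mem_PmvL (by linarith) t hQ

lemma isLeast_integral_max_zero_PmvL (hμ : 0 < μ) (hμL : μ < L) (hs2 : 0 ≤ s2)
    (hfeas : s2 ≤ μ * (L - μ)) :
    IsLeast ((fun P => ∫ x, max 0 x ∂P) '' PmvL μ s2 L) μ := by
  have hmean : ∀ P ∈ PmvL μ s2 L, ∫ x, max 0 x ∂P = μ := fun P hP => by
    rw [← hP.2.2.1]
    refine integral_congr_ae ?_
    filter_upwards [ae_mem_Icc_of_mem_PmvL hP] with x hx using max_eq_right hx.1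
  obtain ⟨P, hP, -⟩ := exists_mem_PmvL_integral_max_eq hμ hfeas le_rfl (by nlinarith) hμL
  refine ⟨⟨P, hP, hmean P hP⟩, ?_⟩
  rintro _ ⟨Q, hQ, rfl⟩
  exact (hmean Q hQ).ge

end PmvL

noncomputable def thresholdSeq (μ s2 L : ℝ) (k : ℕ) : ℝ := μ + s2 / μ * (1 - (1 - μ / L) ^ k)

section thresholdSeq

variable {μ s2 L : ℝ}

lemma thresholdSeq_succ (hμ : μ ≠ 0) (hL : L ≠ 0) (k : ℕ) :
    thresholdSeq μ s2 L (k + 1) = thresholdSeq μ s2 L k +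
      (μ ^ 2 + s2 - thresholdSeq μ s2 L k * μ) / L := by
  rw [thresholdSeq, thresholdSeq, pow_succ]
  field_simp
  ring

lemma pow_one_sub_div_mem_Ioc (hμ : 0 < μ) (hμL : μ < L) (k : ℕ) :
    (1 - μ / L) ^ k ∈ Set.Ioc 0 1 := by
  have : μ / L < 1 := (div_lt_one (hμ.trans hμL)).2 hμL
  have : 0 < μ / L := div_pos hμ (hμ.trans hμL)
  exact ⟨pow_pos (by linarith) k, pow_le_one₀ (by linarith) (by linarith)⟩

lemma le_thresholdSeq (hμ : 0 < μ) (hμL : μ < L) (hs2 : 0 ≤ s2) (k : ℕ) :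
    μ ≤ thresholdSeq μ s2 L k := by
  have := (pow_one_sub_div_mem_Ioc hμ hμL k).2
  have : 0 ≤ s2 / μ * (1 - (1 - μ / L) ^ k) := mul_nonneg (by positivity) (by linarith)
  unfold thresholdSeq
  linarith

lemma mul_thresholdSeq_le (hμ : 0 < μ) (hμL : μ < L) (hs2 : 0 ≤ s2) (k : ℕ) :
    μ * thresholdSeq μ s2 L k ≤ μ ^ 2 + s2 := by
  have := (pow_one_sub_div_mem_Ioc hμ hμL k).1
  have : μ * thresholdSeq μ s2 L k = μ ^ 2 + s2 - s2 * (1 - μ / L) ^ k := by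
    unfold thresholdSeq; field_simp; ring
  nlinarith

lemma thresholdSeq_lt (hμ : 0 < μ) (hμL : μ < L) (hfeas : s2 ≤ μ * (L - μ)) (k : ℕ) :
    thresholdSeq μ s2 L k < L := by
  obtain ⟨hq0, hq1⟩ := pow_one_sub_div_mem_Ioc hμ hμL k
  have : s2 / μ ≤ L - μ := by rw [div_le_iff₀ hμ]; linarith
  have : s2 / μ * (1 - (1 - μ / L) ^ k) < L - μ := by nlinarith
  unfold thresholdSeq
  linarith

end thresholdSeq

lemma robustTAux_PmvL_succ {μ s2 L : ℝ} (hμ : 0 < μ) (hμL : μ < L) (hs2 : 0 ≤ s2)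
    (hfeas : s2 ≤ μ * (L - μ)) (n k : ℕ) :
    robustTAux (fun _ => PmvL μ s2 L) n (k + 1) = thresholdSeq μ s2 L k := by
  induction k with
  | zero =>
    rw [robustTAux, robustTAux, thresholdSeq, pow_zero, sub_self, mul_zero, add_zero]
    exact (isLeast_integral_max_zero_PmvL hμ hμL hs2 hfeas).csInf_eq
  | succ k ih =>
    rw [robustTAux, ih, thresholdSeq_succ hμ.ne' (hμ.trans hμL).ne']
    exact (isLeast_integral_max_PmvL hμ hfeas (le_thresholdSeq hμ hμL hs2 k)
      (mul_thresholdSeq_le hμ hμL hs2 k) (thresholdSeq_lt hμ hμL hfeas k)).csInf_eq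

theorem stmt5 (n : ℕ) (μ s2 L : ℝ) (hμ : 0 < μ) (hμL : μ < L) (hs2 : 0 ≤ s2)
    (hfeas : s2 ≤ μ * (L - μ)) :
    (∀ i : ℕ, i + 1 ≤ n →
      robustT (fun _ => PmvL μ s2 L) n i
        = μ + s2 / μ * (1 - (1 - μ / L) ^ (n - 1 - i))) ∧
    robustT (fun _ => PmvL μ s2 L) n n = 0 := by
  refine ⟨fun i hi => ?_, by rw [robustT, Nat.sub_self, robustTAux]⟩
  rw [robustT, show n - i = n - 1 - i + 1 by omega, robustTAux_PmvL_succ hμ hμL hs2 hfeas]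
  rfl
end

section
/- Let 0 < μ < L and 0 ≤ σ² ≤ μ(L − μ), and let ξ ∈ [0, L]. Then the supremum over P ∈ P(μ,σ²,L) of ∫ min{ξ, x} dP(x) equals: ξ, if 0 ≤ ξ ≤ μ − σ²/(L − μ); (μ(L + ξ) − (μ² + σ²))/L, if μ − σ²/(L − μ) ≤ ξ ≤ μ + σ²/μ; and μ, if μ + σ²/μ ≤ ξ ≤ L. Moreover, this supremum is attained by some P ∈ P(μ,σ²,L). -/
/-!
Every `P ∈ P(μ,σ²,L)` gives three upper bounds for `∫ min ξ x dP`: `ξ` and `μ`, since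
`min ξ x ≤ ξ` and `min ξ x ≤ x`, and `(μ(L + ξ) - (μ² + σ²))/L`, by integrating the
parabola `((L + ξ)x - x²)/L`, which majorizes `min ξ x` on `[0, L]` and touches it at
`0`, `ξ` and `L`. In each regime the relevant bound is attained by a measure with at most
three atoms: at `μ - σ²/(L - μ)` and `L`, at `0`, `ξ` and `L`, or at `0` and `μ + σ²/μ`.
-/

open MeasureTheory

open Set

noncomputable def atomicMeasure {ι : Type*} [Fintype ι] (w a : ι → ℝ) : Measure ℝ :=
  ∑ i, ENNReal.ofReal (w i) • Measure.dirac (a i)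

section atomicMeasure

variable {ι : Type*} [Fintype ι] {w a : ι → ℝ}

lemma integral_atomicMeasure (hw : ∀ i, 0 ≤ w i) (f : ℝ → ℝ) :
    ∫ x, f x ∂atomicMeasure w a = ∑ i, w i * f (a i) := by
  rw [atomicMeasure, integral_finsetSum_measure fun i _ =>
    (integrable_dirac enorm_lt_top).smul_measure ENNReal.ofReal_ne_top]
  simp [integral_smul_measure, ENNReal.toReal_ofReal (hw _)]

lemma atomicMeasure_apply_of_forall_mem (hw : ∀ i, 0 ≤ w i) {s : Set ℝ}
    (hs : MeasurableSet s) (ha : ∀ i, a i ∈ s) :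
    atomicMeasure w a s = ENNReal.ofReal (∑ i, w i) := by
  rw [ENNReal.ofReal_sum_of_nonneg fun i _ => hw i]
  simp [atomicMeasure, Measure.finsetSum_apply, Measure.dirac_apply' _ hs, ha]

lemma atomicMeasure_mem_PmvL {μ s2 L : ℝ} (hw : ∀ i, 0 ≤ w i) (hsum : ∑ i, w i = 1)
    (ha : ∀ i, a i ∈ Icc 0 L) (hmean : ∑ i, w i * a i = μ)
    (hm2 : ∑ i, w i * a i ^ 2 = μ ^ 2 + s2) : atomicMeasure w a ∈ PmvL μ s2 L := by
  refine ⟨⟨?_⟩, ?_, ?_, ?_⟩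
  · rw [atomicMeasure_apply_of_forall_mem hw MeasurableSet.univ fun _ => trivial, hsum,
      ENNReal.ofReal_one]
  · rw [atomicMeasure_apply_of_forall_mem hw measurableSet_Icc ha, hsum, ENNReal.ofReal_one]
  · rw [integral_atomicMeasure hw]; exact hmean
  · rw [integral_atomicMeasure hw]; exact hm2

end atomicMeasure

/-- The parabola through `(0, 0)`, `(ξ, Lξ)` and `(L, Lξ)` majorizes `L * min ξ x` on
`[0, L]`. -/
lemma mul_min_le_quadratic {L ξ x : ℝ} (hx : x ∈ Icc 0 L) :
    L * min ξ x ≤ (L + ξ) * x - x ^ 2 := by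
  rcases le_total x ξ with h | h
  · rw [min_eq_right h]; nlinarith [hx.1]
  · rw [min_eq_left h]; nlinarith [hx.2]

namespace PmvL

variable {μ s2 L : ℝ} {P : Measure ℝ}

lemma ae_mem_Icc (hP : P ∈ PmvL μ s2 L) : ∀ᵐ x ∂P, x ∈ Icc 0 L := by
  have := hP.1
  exact ae_iff.2 ((prob_compl_eq_zero_iff measurableSet_Icc).2 hP.2.1)

lemma integrable_of_continuous (hP : P ∈ PmvL μ s2 L) {f : ℝ → ℝ} (hf : Continuous f) :
    Integrable f P := by
  have := hP.1
  simpa [IntegrableOn, Measure.restrict_eq_self_of_ae_mem (ae_mem_Icc hP)] using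
    hf.integrableOn_Icc (μ := P) (a := 0) (b := L)

lemma integral_min_le_left (hP : P ∈ PmvL μ s2 L) (ξ : ℝ) : ∫ x, min ξ x ∂P ≤ ξ := by
  have := hP.1
  calc ∫ x, min ξ x ∂P ≤ ∫ _, ξ ∂P :=
        integral_mono (integrable_of_continuous hP (by fun_prop)) (integrable_const ξ)
          fun x => min_le_left _ _
    _ = ξ := by simp

lemma integral_min_le_mean (hP : P ∈ PmvL μ s2 L) (ξ : ℝ) : ∫ x, min ξ x ∂P ≤ μ :=
  hP.2.2.1 ▸ integral_mono (integrable_of_continuous hP (by fun_prop))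
    (integrable_of_continuous hP continuous_id) fun x => min_le_right _ _

lemma integral_min_le_quadratic (hP : P ∈ PmvL μ s2 L) (hL : 0 < L) (ξ : ℝ) :
    ∫ x, min ξ x ∂P ≤ (μ * (L + ξ) - (μ ^ 2 + s2)) / L := by
  rw [le_div_iff₀ hL, mul_comm, ← integral_const_mul]
  calc ∫ x, L * min ξ x ∂P ≤ ∫ x, ((L + ξ) * x - x ^ 2) ∂P :=
        integral_mono_ae (integrable_of_continuous hP (by fun_prop))
          (integrable_of_continuous hP (by fun_prop))
          ((ae_mem_Icc hP).mono fun x hx => mul_min_le_quadratic hx)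
    _ = μ * (L + ξ) - (μ ^ 2 + s2) := by
      rw [integral_sub (integrable_of_continuous hP (by fun_prop))
        (integrable_of_continuous hP (by fun_prop)), integral_const_mul, hP.2.2.1, hP.2.2.2]
      ring

end PmvL

section Attainment

variable {μ s2 L ξ : ℝ}

lemma exists_mem_PmvL_integral_min_eq_self (hμL : μ < L) (hs2 : 0 ≤ s2) (hξ0 : 0 ≤ ξ)
    (hξ : ξ ≤ μ - s2 / (L - μ)) : ∃ P ∈ PmvL μ s2 L, ∫ x, min ξ x ∂P = ξ := by
  have hLμ : 0 < L - μ := sub_pos.2 hμL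
  set a := μ - s2 / (L - μ)
  have haL : a ≤ L := by have := div_nonneg hs2 hLμ.le; linarith
  set p := (L - μ) ^ 2 / ((L - μ) ^ 2 + s2)
  have hp0 : 0 ≤ p := by positivity
  have hp1 : p ≤ 1 := by rw [div_le_one (by positivity)]; linarith
  have hw : ∀ i, 0 ≤ ![p, 1 - p] i := Fin.forall_fin_two.2 ⟨hp0, sub_nonneg.2 hp1⟩
  have ha : ∀ i, ![a, L] i ∈ Icc 0 L :=
    Fin.forall_fin_two.2 ⟨⟨hξ0.trans hξ, haL⟩, hξ0.trans (hξ.trans haL), le_rfl⟩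
  refine ⟨atomicMeasure ![p, 1 - p] ![a, L], atomicMeasure_mem_PmvL hw ?_ ha ?_ ?_, ?_⟩
  all_goals simp only [integral_atomicMeasure hw, Fin.sum_univ_two,
    Matrix.cons_val_zero, Matrix.cons_val_one, Matrix.cons_val_fin_one, a, p]
  · ring
  · field_simp; ring
  · field_simp; ring
  · rw [min_eq_left hξ, min_eq_left (hξ.trans haL)]; ring

lemma exists_mem_PmvL_integral_min_eq_mean (hμ : 0 < μ) (hs2 : 0 ≤ s2) (hξ0 : 0 ≤ ξ)
    (hξ : μ + s2 / μ ≤ ξ) (hξL : ξ ≤ L) : ∃ P ∈ PmvL μ s2 L, ∫ x, min ξ x ∂P = μ := by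
  set b := μ + s2 / μ
  have hb0 : 0 ≤ b := by positivity
  set w := μ ^ 2 / (μ ^ 2 + s2)
  have hw0 : 0 ≤ w := by positivity
  have hw1 : w ≤ 1 := by rw [div_le_one (by positivity)]; linarith
  have hw : ∀ i, 0 ≤ ![1 - w, w] i := Fin.forall_fin_two.2 ⟨sub_nonneg.2 hw1, hw0⟩
  have ha : ∀ i, ![0, b] i ∈ Icc 0 L :=
    Fin.forall_fin_two.2 ⟨⟨le_rfl, hb0.trans (hξ.trans hξL)⟩, hb0, hξ.trans hξL⟩
  refine ⟨atomicMeasure ![1 - w, w] ![0, b], atomicMeasure_mem_PmvL hw ?_ ha ?_ ?_, ?_⟩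
  all_goals simp only [integral_atomicMeasure hw, Fin.sum_univ_two,
    Matrix.cons_val_zero, Matrix.cons_val_one, Matrix.cons_val_fin_one, b, w]
  · ring
  · field_simp; ring
  · field_simp; ring
  · simp only [min_eq_right hξ0, min_eq_right hξ, b]
    field_simp; ring

/-- The weights of the atoms `0, ξ, L` are those of Lagrange interpolation at these nodes:
the weight of `t` is the expectation of `∏_{s ≠ t} (x - s) / (t - s)`. -/
lemma exists_mem_PmvL_integral_min_eq_quadratic_of_mem_Ioo (hμ : 0 < μ) (hμL : μ < L)
    (hfeas : s2 ≤ μ * (L - μ)) (hξ : ξ ∈ Ioo 0 L) (hlo : μ - s2 / (L - μ) ≤ ξ)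
    (hhi : ξ ≤ μ + s2 / μ) :
    ∃ P ∈ PmvL μ s2 L, ∫ x, min ξ x ∂P = (μ * (L + ξ) - (μ ^ 2 + s2)) / L := by
  obtain ⟨hξ0, hξL⟩ := hξ
  have hL : 0 < L := hξ0.trans hξL
  have hLξ : 0 < L - ξ := sub_pos.2 hξL
  have hLμ : 0 < L - μ := sub_pos.2 hμL
  set p0 := (s2 - (μ - ξ) * (L - μ)) / (ξ * L)
  set pξ := (μ * (L - μ) - s2) / (ξ * (L - ξ))
  set pL := (μ ^ 2 + s2 - μ * ξ) / (L * (L - ξ))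
  have hp0 : 0 ≤ p0 := by
    have := (le_div_iff₀ hLμ).1 (sub_le_comm.1 hlo)
    exact div_nonneg (by linarith) (by positivity)
  have hpξ : 0 ≤ pξ := div_nonneg (by linarith) (by positivity)
  have hpL : 0 ≤ pL := by
    have := (le_div_iff₀ hμ).1 (sub_le_iff_le_add'.2 hhi)
    exact div_nonneg (by nlinarith) (by positivity)
  have hw : ∀ i, 0 ≤ ![p0, pξ, pL] i :=
    Fin.forall_fin_succ.2 ⟨hp0, Fin.forall_fin_two.2 ⟨hpξ, hpL⟩⟩
  have ha : ∀ i, ![0, ξ, L] i ∈ Icc 0 L := Fin.forall_fin_succ.2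
    ⟨⟨le_rfl, hL.le⟩, Fin.forall_fin_two.2 ⟨⟨hξ0.le, hξL.le⟩, hL.le, le_rfl⟩⟩
  refine ⟨atomicMeasure ![p0, pξ, pL] ![0, ξ, L], atomicMeasure_mem_PmvL hw ?_ ha ?_ ?_, ?_⟩
  all_goals simp only [integral_atomicMeasure hw, Fin.sum_univ_three,
    Matrix.cons_val_zero, Matrix.cons_val_one, Matrix.cons_val, p0, pξ, pL]
  · field_simp; ring
  · field_simp; ring
  · field_simp; ring
  · rw [min_eq_right hξ0.le, min_self, min_eq_left hξL.le]; field_simp; ring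

/-- At `ξ = 0` and `ξ = L` the constraints force `s2 = μ * (L - μ)`, and the value agrees
with that of the neighbouring regime. -/
lemma exists_mem_PmvL_integral_min_eq_quadratic (hμ : 0 < μ) (hμL : μ < L) (hs2 : 0 ≤ s2)
    (hfeas : s2 ≤ μ * (L - μ)) (hξ : ξ ∈ Icc 0 L) (hlo : μ - s2 / (L - μ) ≤ ξ)
    (hhi : ξ ≤ μ + s2 / μ) :
    ∃ P ∈ PmvL μ s2 L, ∫ x, min ξ x ∂P = (μ * (L + ξ) - (μ ^ 2 + s2)) / L := by
  have hLμ : 0 < L - μ := sub_pos.2 hμL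
  have hL : 0 < L := hμ.trans hμL
  rcases hξ.1.eq_or_lt with rfl | hξ0
  · have hs2_eq : s2 = μ * (L - μ) :=
      hfeas.antisymm (by linarith [(le_div_iff₀ hLμ).1 (sub_nonpos.1 hlo)])
    obtain ⟨P, hP, hval⟩ := exists_mem_PmvL_integral_min_eq_self hμL hs2 le_rfl
      (by rw [hs2_eq, mul_div_cancel_right₀ _ hLμ.ne', sub_self])
    refine ⟨P, hP, hval.trans ?_⟩
    rw [hs2_eq]; field_simp; ring
  rcases hξ.2.eq_or_lt with rfl | hξL
  · have hs2_eq : s2 = μ * (ξ - μ) :=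
      hfeas.antisymm (by linarith [(le_div_iff₀ hμ).1 (sub_le_iff_le_add'.2 hhi)])
    obtain ⟨P, hP, hval⟩ := exists_mem_PmvL_integral_min_eq_mean hμ hs2 hξ0.le
      (by rw [hs2_eq, mul_div_cancel_left₀ _ hμ.ne', add_sub_cancel]) le_rfl
    refine ⟨P, hP, hval.trans ?_⟩
    rw [hs2_eq]; field_simp; ring
  exact exists_mem_PmvL_integral_min_eq_quadratic_of_mem_Ioo hμ hμL hfeas ⟨hξ0, hξL⟩ hlo hhi

end Attainment

theorem stmt10 (μ L s2 ξ : ℝ) (hμ : 0 < μ) (hμL : μ < L) (hs2 : 0 ≤ s2)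
    (hfeas : s2 ≤ μ * (L - μ)) (hξ0 : 0 ≤ ξ) (hξL : ξ ≤ L) :
    (ξ ≤ μ - s2 / (L - μ) →
      IsGreatest ((fun P => ∫ x, min ξ x ∂P) '' PmvL μ s2 L) ξ) ∧
    (μ - s2 / (L - μ) ≤ ξ → ξ ≤ μ + s2 / μ →
      IsGreatest ((fun P => ∫ x, min ξ x ∂P) '' PmvL μ s2 L)
        ((μ * (L + ξ) - (μ ^ 2 + s2)) / L)) ∧
    (μ + s2 / μ ≤ ξ →
      IsGreatest ((fun P => ∫ x, min ξ x ∂P) '' PmvL μ s2 L) μ) := by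
  refine ⟨fun hξ => ⟨exists_mem_PmvL_integral_min_eq_self hμL hs2 hξ0 hξ, ?_⟩,
    fun hlo hhi =>
      ⟨exists_mem_PmvL_integral_min_eq_quadratic hμ hμL hs2 hfeas ⟨hξ0, hξL⟩ hlo hhi, ?_⟩,
    fun hξ => ⟨exists_mem_PmvL_integral_min_eq_mean hμ hs2 hξ0 hξ hξL, ?_⟩⟩ <;>
  rintro _ ⟨P, hP, rfl⟩
  · exact PmvL.integral_min_le_left hP ξ
  · exact PmvL.integral_min_le_quadratic hP (hμ.trans hμL) ξ
  · exact PmvL.integral_min_le_mean hP ξ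
end

section
/- Let L > 0, μ, σ² ≥ 0, let P ∈ P(μ,σ²,L), and let ξ ∈ [0, L]. Then ∫ min{ξ, x} dP(x) ≤ (μ(L + ξ) − (μ² + σ²))/L. -/
/-!
On `[0, L]` the concave parabola `x ↦ x (L + ξ - x) / L`, which passes through `(0, 0)`,
`(ξ, ξ)` and `(L, ξ)`, lies above the broken line `x ↦ min ξ x`. Integrating against `P`
turns the parabola into the given combination of the first two moments.
-/

open MeasureTheory

lemma min_le_parabola {L ξ x : ℝ} (hL : 0 < L) (hx : x ∈ Set.Icc 0 L) :
    min ξ x ≤ (x * (L + ξ) - x ^ 2) / L := by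
  rw [le_div_iff₀ hL]
  rcases le_total x ξ with hxξ | hξx
  · rw [min_eq_right hxξ]
    nlinarith [hx.1]
  · rw [min_eq_left hξx]
    nlinarith [hx.2]

lemma Continuous.integrable_of_ae_mem_compact {X E : Type*} [TopologicalSpace X] [T2Space X]
    [MeasurableSpace X] [OpensMeasurableSpace X] [NormedAddCommGroup E]
    {μ : Measure X} [IsFiniteMeasure μ] {f : X → E} {K : Set X}
    (hf : Continuous f) (hK : IsCompact K) (hμK : ∀ᵐ x ∂μ, x ∈ K) : Integrable f μ := by
  rw [← Measure.restrict_eq_self_of_ae_mem hμK]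
  exact hf.continuousOn.integrableOn_compact hK

theorem stmt11_general (μ L s2 ξ : ℝ) (hL : 0 < L)
    (P : Measure ℝ) (hP : P ∈ PmvL μ s2 L) :
    (∫ x, min ξ x ∂P) ≤ (μ * (L + ξ) - (μ ^ 2 + s2)) / L := by
  obtain ⟨hprob, hsupp, hmean, hm2⟩ := hP
  have hae : ∀ᵐ x ∂P, x ∈ Set.Icc 0 L := (mem_ae_iff_prob_eq_one measurableSet_Icc).2 hsupp
  have hint {f : ℝ → ℝ} (hf : Continuous f) : Integrable f P :=
    hf.integrable_of_ae_mem_compact isCompact_Icc hae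
  calc (∫ x, min ξ x ∂P) ≤ ∫ x, (x * (L + ξ) - x ^ 2) / L ∂P :=
        integral_mono_ae (hint (by fun_prop)) (hint (by fun_prop))
          (hae.mono fun _ hx ↦ min_le_parabola hL hx)
    _ = ((∫ x, x ∂P) * (L + ξ) - ∫ x, x ^ 2 ∂P) / L := by
        rw [integral_div, integral_sub (hint (by fun_prop)) (hint (by fun_prop)),
          integral_mul_const]
    _ = (μ * (L + ξ) - (μ ^ 2 + s2)) / L := by rw [hmean, hm2]

theorem stmt11 (μ L s2 ξ : ℝ) (hL : 0 < L) (hμ : 0 ≤ μ) (hs2 : 0 ≤ s2)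
    (P : Measure ℝ) (hP : P ∈ PmvL μ s2 L) (hξ0 : 0 ≤ ξ) (hξL : ξ ≤ L) :
    (∫ x, min ξ x ∂P) ≤ (μ * (L + ξ) - (μ ^ 2 + s2)) / L :=
  stmt11_general μ L s2 ξ hL P hP
end

section
/- Let 0 < μ < L, σ² ≥ 0 with σ² ≤ μ(L − μ), and let ξ satisfy 0 < ξ < L and μ − σ²/(L − μ) ≤ ξ ≤ μ + σ²/μ. Define p₀ = (Lξ − (L + ξ)μ + μ² + σ²)/(Lξ), p_ξ = (Lμ − μ² − σ²)/((L − ξ)ξ), and p_L = (μ² + σ² − ξμ)/((L − ξ)L). Then p₀, p_ξ, p_L ≥ 0 and p₀ + p_ξ + p_L = 1; the measure P = p₀·δ₀ + p_ξ·δ_ξ + p_L·δ_L belongs to P(μ,σ²,L); and ∫ min{ξ, x} dP(x) = (μ(L + ξ) − (μ² + σ²))/L. -/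
/-!
The three weights solve the Vandermonde system expressing total mass `1`, mean `μ` and second
moment `μ² + σ²` for a measure on `{0, ξ, L}`; the two bounds on `ξ` and the feasibility bound
`σ² ≤ μ(L - μ)` are exactly the nonnegativity of `p₀`, `p_L` and `p_ξ` respectively. On
`{0, ξ, L}` the function `min ξ x` agrees with the quadratic `x (L + ξ - x) / L`, whose integral
is read off from the first two moments.
-/

open MeasureTheory

section ThreePointMeasure

variable {α : Type*} [MeasurableSpace α] {a b c : ℝ} {x y z : α}

theorem integral_ofReal_smul_dirac_add_three [MeasurableSingletonClass α]
    (ha : 0 ≤ a) (hb : 0 ≤ b) (hc : 0 ≤ c) (f : α → ℝ) :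
    ∫ t, f t ∂(ENNReal.ofReal a • Measure.dirac x + ENNReal.ofReal b • Measure.dirac y
      + ENNReal.ofReal c • Measure.dirac z) = a * f x + b * f y + c * f z := by
  have integrable (w : ℝ) (p : α) : Integrable f (ENNReal.ofReal w • Measure.dirac p) :=
    (integrable_dirac enorm_lt_top).smul_measure ENNReal.ofReal_ne_top
  rw [integral_add_measure ((integrable a x).add_measure (integrable b y)) (integrable c z),
    integral_add_measure (integrable a x) (integrable b y)]
  simp only [integral_smul_measure, integral_dirac, ENNReal.toReal_ofReal ha,
    ENNReal.toReal_ofReal hb, ENNReal.toReal_ofReal hc, smul_eq_mul]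

theorem ofReal_smul_dirac_add_three_apply_of_mem (ha : 0 ≤ a) (hb : 0 ≤ b) (hc : 0 ≤ c)
    {s : Set α} (hx : x ∈ s) (hy : y ∈ s) (hz : z ∈ s) :
    (ENNReal.ofReal a • Measure.dirac x + ENNReal.ofReal b • Measure.dirac y
      + ENNReal.ofReal c • Measure.dirac z) s = ENNReal.ofReal (a + b + c) := by
  simp only [Measure.add_apply, Measure.smul_apply, Measure.dirac_apply_of_mem hx,
    Measure.dirac_apply_of_mem hy, Measure.dirac_apply_of_mem hz, smul_eq_mul, mul_one]
  rw [ENNReal.ofReal_add (add_nonneg ha hb) hc, ENNReal.ofReal_add ha hb]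

theorem isProbabilityMeasure_ofReal_smul_dirac_add_three (ha : 0 ≤ a) (hb : 0 ≤ b)
    (hc : 0 ≤ c) (habc : a + b + c = 1) :
    IsProbabilityMeasure (ENNReal.ofReal a • Measure.dirac x + ENNReal.ofReal b • Measure.dirac y
      + ENNReal.ofReal c • Measure.dirac z) :=
  ⟨by rw [ofReal_smul_dirac_add_three_apply_of_mem ha hb hc (Set.mem_univ x) (Set.mem_univ y)
    (Set.mem_univ z), habc, ENNReal.ofReal_one]⟩

end ThreePointMeasure

theorem stmt12_general (μ L s2 ξ : ℝ) (hμ : 0 < μ) (hμL : μ < L)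
    (hfeas : s2 ≤ μ * (L - μ)) (hξ0 : 0 < ξ) (hξL : ξ < L)
    (hξlo : μ - s2 / (L - μ) ≤ ξ) (hξhi : ξ ≤ μ + s2 / μ)
    (p0 pξ pL : ℝ)
    (hp0 : p0 = (L * ξ - (L + ξ) * μ + μ ^ 2 + s2) / (L * ξ))
    (hpξ : pξ = (L * μ - μ ^ 2 - s2) / ((L - ξ) * ξ))
    (hpL : pL = (μ ^ 2 + s2 - ξ * μ) / ((L - ξ) * L))
    (P : Measure ℝ)
    (hPdef : P = ENNReal.ofReal p0 • Measure.dirac 0 +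
      ENNReal.ofReal pξ • Measure.dirac ξ + ENNReal.ofReal pL • Measure.dirac L) :
    (0 ≤ p0 ∧ 0 ≤ pξ ∧ 0 ≤ pL) ∧ p0 + pξ + pL = 1 ∧
    P ∈ PmvL μ s2 L ∧
    (∫ x, min ξ x ∂P) = (μ * (L + ξ) - (μ ^ 2 + s2)) / L := by
  have hL : 0 < L := hμ.trans hμL
  have hLξ : 0 < L - ξ := sub_pos.2 hξL
  have hLμ : 0 < L - μ := sub_pos.2 hμL
  have hlo : (μ - ξ) * (L - μ) ≤ s2 := (le_div_iff₀ hLμ).1 (by linarith)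
  have hhi : (ξ - μ) * μ ≤ s2 := (le_div_iff₀ hμ).1 (by linarith)
  have hp0n : 0 ≤ p0 := hp0 ▸ div_nonneg (by linarith) (by positivity)
  have hpξn : 0 ≤ pξ := hpξ ▸ div_nonneg (by linarith) (by positivity)
  have hpLn : 0 ≤ pL := hpL ▸ div_nonneg (by linarith) (by positivity)
  have hsum : p0 + pξ + pL = 1 := by
    rw [hp0, hpξ, hpL]
    field_simp
    ring
  have hI (f : ℝ → ℝ) : ∫ x, f x ∂P = p0 * f 0 + pξ * f ξ + pL * f L :=
    hPdef ▸ integral_ofReal_smul_dirac_add_three hp0n hpξn hpLn f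
  refine ⟨⟨hp0n, hpξn, hpLn⟩, hsum, ⟨hPdef ▸
    isProbabilityMeasure_ofReal_smul_dirac_add_three hp0n hpξn hpLn hsum, ?_, ?_, ?_⟩, ?_⟩
  · rw [hPdef, ofReal_smul_dirac_add_three_apply_of_mem hp0n hpξn hpLn
      (Set.left_mem_Icc.2 hL.le) ⟨hξ0.le, hξL.le⟩ (Set.right_mem_Icc.2 hL.le), hsum,
      ENNReal.ofReal_one]
  all_goals
    simp only [hI, min_eq_right hξ0.le, min_self, min_eq_left hξL.le, hp0, hpξ, hpL]
    field_simp
    ring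

theorem stmt12 (μ L s2 ξ : ℝ) (hμ : 0 < μ) (hμL : μ < L) (hs2 : 0 ≤ s2)
    (hfeas : s2 ≤ μ * (L - μ)) (hξ0 : 0 < ξ) (hξL : ξ < L)
    (hξlo : μ - s2 / (L - μ) ≤ ξ) (hξhi : ξ ≤ μ + s2 / μ)
    (p0 pξ pL : ℝ)
    (hp0 : p0 = (L * ξ - (L + ξ) * μ + μ ^ 2 + s2) / (L * ξ))
    (hpξ : pξ = (L * μ - μ ^ 2 - s2) / ((L - ξ) * ξ))
    (hpL : pL = (μ ^ 2 + s2 - ξ * μ) / ((L - ξ) * L))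
    (P : Measure ℝ)
    (hPdef : P = ENNReal.ofReal p0 • Measure.dirac 0 +
      ENNReal.ofReal pξ • Measure.dirac ξ + ENNReal.ofReal pL • Measure.dirac L) :
    (0 ≤ p0 ∧ 0 ≤ pξ ∧ 0 ≤ pL) ∧ p0 + pξ + pL = 1 ∧
    P ∈ PmvL μ s2 L ∧
    (∫ x, min ξ x ∂P) = (μ * (L + ξ) - (μ ^ 2 + s2)) / L :=
  stmt12_general μ L s2 ξ hμ hμL hfeas hξ0 hξL hξlo hξhi p0 pξ pL hp0 hpξ hpL P hPdef
end

section
/- Let μ > 0 and 0 ≤ d < 2μ, and suppose 2μ²/(2μ − d) ≤ L. Then the two-point measure P = (d/(2μ))·δ₀ + (1 − d/(2μ))·δ_{2μ²/(2μ−d)} belongs to P(μ,d,L), and for every ξ with μ ≤ ξ ≤ 2μ²/(2μ − d) one has ∫ min{ξ, x} dP(x) = ξ·(1 − d/(2μ)). -/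
open MeasureTheory

/-- `P(μ,d,L)`: Borel probability measures supported in `[0,L]` with mean `μ`
and mean absolute deviation `d`. -/
def PmdL (μ d L : ℝ) : Set (Measure ℝ) :=
  {P | IsProbabilityMeasure P ∧ P (Set.Icc 0 L) = 1 ∧
       (∫ x, x ∂P) = μ ∧ (∫ x, |x - μ| ∂P) = d}

/-!
`P` is the Bernoulli measure `Ber(0, s, d/(2μ))` with `s = 2μ²/(2μ - d)`, so every integral
against it is a two-term sum. The atom `s` is placed so that the mass `1 - d/(2μ)` it carries
contributes exactly the mean `μ`, and `min ξ ·` vanishes at `0` and equals `ξ` at `s`.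
-/

open ProbabilityTheory unitInterval

lemma ofReal_smul_dirac_add_eq_bernoulliMeasure {X : Type*} [MeasurableSpace X] (x y : X)
    (p : I) :
    ENNReal.ofReal p • Measure.dirac x + ENNReal.ofReal (1 - p) • Measure.dirac y =
      Ber(x, y, p) := by
  rw [bernoulliMeasure_def, ENNReal.ofReal_eq_coe_nnreal p.2.1, ← coe_symm_eq,
    ENNReal.ofReal_eq_coe_nnreal (σ p).2.1]
  rfl

theorem stmt14 (μ d L : ℝ) (hμ : 0 < μ) (hd0 : 0 ≤ d) (hd : d < 2 * μ)
    (hL : 2 * μ ^ 2 / (2 * μ - d) ≤ L)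
    (P : Measure ℝ)
    (hPdef : P = ENNReal.ofReal (d / (2 * μ)) • Measure.dirac 0 +
      ENNReal.ofReal (1 - d / (2 * μ)) • Measure.dirac (2 * μ ^ 2 / (2 * μ - d))) :
    P ∈ PmdL μ d L ∧
    ∀ ξ : ℝ, μ ≤ ξ → ξ ≤ 2 * μ ^ 2 / (2 * μ - d) →
      (∫ x, min ξ x ∂P) = ξ * (1 - d / (2 * μ)) := by
  set s := 2 * μ ^ 2 / (2 * μ - d)
  have hgap : 0 < 2 * μ - d := by linarith
  have hp : d / (2 * μ) ∈ I := ⟨by positivity, (div_le_one (by linarith)).2 hd.le⟩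
  have hs : 0 < s := by positivity
  have hμs : μ ≤ s := by rw [le_div_iff₀ hgap]; nlinarith
  have hmean : (1 - d / (2 * μ)) * s = μ := by simp only [s]; field_simp
  rw [ofReal_smul_dirac_add_eq_bernoulliMeasure 0 s ⟨_, hp⟩] at hPdef
  subst hPdef
  refine ⟨⟨inferInstance, bernoulliMeasure_apply_of_mem_of_mem _ measurableSet_Icc
    ⟨le_rfl, hs.le.trans hL⟩ ⟨hs.le, hL⟩, ?_, ?_⟩, fun ξ hμξ hξs => ?_⟩ <;>
    simp only [integral_bernoulliMeasure, smul_eq_mul]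
  · simpa [mul_comm] using hmean
  · rw [zero_sub, abs_neg, abs_of_pos hμ, abs_of_nonneg (sub_nonneg.2 hμs), mul_sub,
      hmean]
    field_simp
    ring
  · rw [min_eq_right (hμ.le.trans hμξ), min_eq_left hξs]
    ring
end

section
/- Let μ, σ², L ≥ 0. There exists a Borel probability measure P supported in [0, L] with mean ∫ x dP = μ and second moment ∫ x² dP = μ² + σ² if and only if σ² ≤ μ(L − μ). -/
open MeasureTheory ProbabilityTheory Set

theorem integral_sq_le_mul_integral_of_ae_mem_Icc {P : Measure ℝ} [IsFiniteMeasure P] {L : ℝ}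
    (h : ∀ᵐ x ∂P, x ∈ Icc 0 L) : ∫ x, x ^ 2 ∂P ≤ L * ∫ x, x ∂P := by
  have hint : Integrable (fun x : ℝ ↦ x) P := .of_mem_Icc 0 L aemeasurable_id h
  rw [← integral_const_mul]
  refine integral_mono_ae ?_ (hint.const_mul L) ?_
  · refine .of_mem_Icc 0 (L ^ 2) (by fun_prop) ?_
    filter_upwards [h] with x hx
    exact ⟨sq_nonneg x, pow_le_pow_left₀ hx.1 hx.2 2⟩
  · filter_upwards [h] with x hx
    rw [sq]
    exact mul_le_mul_of_nonneg_right hx.2 hx.1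

/-- The witness is the two-point law putting mass `m₁² / m₂` at `m₂ / m₁` and the rest at `0`. -/
theorem exists_isProbabilityMeasure_Icc_moments {L m₁ m₂ : ℝ} (hL : 0 ≤ L) (h₁ : m₁ ^ 2 ≤ m₂)
    (h₂ : m₂ ≤ L * m₁) :
    ∃ P : Measure ℝ, IsProbabilityMeasure P ∧ P (Icc 0 L) = 1 ∧
      ∫ x, x ∂P = m₁ ∧ ∫ x, x ^ 2 ∂P = m₂ := by
  rcases eq_or_ne m₁ 0 with rfl | hm₁
  · have hm₂ : m₂ = 0 := by nlinarith
    subst hm₂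
    exact ⟨Measure.dirac 0, inferInstance, by simp [hL], by simp, by simp⟩
  have hm₁_pos : 0 < m₁ := by nlinarith [sq_pos_of_ne_zero hm₁]
  have hm₂_pos : 0 < m₂ := lt_of_lt_of_le (by positivity) h₁
  let p : unitInterval := ⟨m₁ ^ 2 / m₂, by positivity, (div_le_one hm₂_pos).2 h₁⟩
  refine ⟨Ber(m₂ / m₁, 0, p), inferInstance, ?_, ?_, ?_⟩
  · exact bernoulliMeasure_apply_of_mem_of_mem p measurableSet_Icc
      ⟨by positivity, (div_le_iff₀ hm₁_pos).2 h₂⟩ ⟨le_rfl, hL⟩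
  all_goals
    rw [integral_bernoulliMeasure]
    simp only [p, smul_eq_mul]
    field_simp
    ring

theorem stmt15_general (μ s2 L : ℝ) (hs2 : 0 ≤ s2) (hL : 0 ≤ L) :
    (∃ P : Measure ℝ, IsProbabilityMeasure P ∧ P (Set.Icc 0 L) = 1 ∧
      (∫ x, x ∂P) = μ ∧ (∫ x, x ^ 2 ∂P) = μ ^ 2 + s2) ↔ s2 ≤ μ * (L - μ) := by
  constructor
  · rintro ⟨P, hP, hP_Icc, hmean, hsq⟩
    have := integral_sq_le_mul_integral_of_ae_mem_Icc
      ((mem_ae_iff_prob_eq_one measurableSet_Icc).2 hP_Icc)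
    rw [hmean, hsq] at this
    linarith
  · intro h
    exact exists_isProbabilityMeasure_Icc_moments hL (by linarith) (by linarith)

theorem stmt15 (μ s2 L : ℝ) (hμ : 0 ≤ μ) (hs2 : 0 ≤ s2) (hL : 0 ≤ L) :
    (∃ P : Measure ℝ, IsProbabilityMeasure P ∧ P (Set.Icc 0 L) = 1 ∧
      (∫ x, x ∂P) = μ ∧ (∫ x, x ^ 2 ∂P) = μ ^ 2 + s2) ↔ s2 ≤ μ * (L - μ) :=
  stmt15_general μ s2 L hs2 hL
end

section
/- Let μ > 0, L > 0 and σ² ≥ 0 with σ² ≤ μ(L − μ). Let P = p·δ_a + (1−p)·δ_b be any two-point distribution in P₂(μ,σ²,L). Then b ≥ μ + σ²/μ and 1 − p ≥ σ²/((L − μ)² + σ²). -/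
/-!
The moment conditions say `E[(X - a)(X - b)] = 0`, i.e. `(μ - a)(b - μ) = σ²`, while the mean
condition balances the weights: `p (μ - a) = (1 - p)(b - μ)`. As `0 ≤ a`, the first identity gives
`σ² ≤ μ (b - μ)`; combining the two gives `p σ² = (1 - p)(b - μ)² ≤ (1 - p)(L - μ)²`.
-/

namespace TwoPoint

variable {a b p μ s2 : ℝ}

theorem left_le_mean (hab : a ≤ b) (hp1 : p ≤ 1) (hmean : p * a + (1 - p) * b = μ) : a ≤ μ := by
  nlinarith

theorem mean_le_right (hab : a ≤ b) (hp0 : 0 ≤ p) (hmean : p * a + (1 - p) * b = μ) : μ ≤ b := by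
  nlinarith

theorem mul_sub_mean_eq (hmean : p * a + (1 - p) * b = μ)
    (hm2 : p * a ^ 2 + (1 - p) * b ^ 2 = μ ^ 2 + s2) : (μ - a) * (b - μ) = s2 := by
  linear_combination hm2 - (a + b) * hmean

theorem weight_mul_eq (hmean : p * a + (1 - p) * b = μ)
    (hm2 : p * a ^ 2 + (1 - p) * b ^ 2 = μ ^ 2 + s2) : p * s2 = (1 - p) * (b - μ) ^ 2 := by
  linear_combination (μ - b) * hmean - p * mul_sub_mean_eq hmean hm2

theorem add_div_mean_le_right (ha : 0 ≤ a) (hab : a ≤ b) (hp0 : 0 ≤ p) (hp1 : p ≤ 1)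
    (hmean : p * a + (1 - p) * b = μ) (hm2 : p * a ^ 2 + (1 - p) * b ^ 2 = μ ^ 2 + s2) :
    μ + s2 / μ ≤ b := by
  have hbμ : 0 ≤ b - μ := sub_nonneg.2 (mean_le_right hab hp0 hmean)
  have hμ : 0 ≤ μ := ha.trans (left_le_mean hab hp1 hmean)
  have hs2 : s2 ≤ (b - μ) * μ := by
    rw [← mul_sub_mean_eq hmean hm2, mul_comm (b - μ)]
    exact mul_le_mul_of_nonneg_right (by linarith) hbμ
  linarith [div_le_of_le_mul₀ hμ hbμ hs2]

theorem div_le_one_sub_weight {L : ℝ} (hab : a ≤ b) (hbL : b ≤ L) (hp0 : 0 ≤ p) (hp1 : p ≤ 1)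
    (hmean : p * a + (1 - p) * b = μ) (hm2 : p * a ^ 2 + (1 - p) * b ^ 2 = μ ^ 2 + s2) :
    s2 / ((L - μ) ^ 2 + s2) ≤ 1 - p := by
  have hbμ : 0 ≤ b - μ := sub_nonneg.2 (mean_le_right hab hp0 hmean)
  have hs2 : 0 ≤ s2 := by
    rw [← mul_sub_mean_eq hmean hm2]
    exact mul_nonneg (sub_nonneg.2 (left_le_mean hab hp1 hmean)) hbμ
  have hsq : (b - μ) ^ 2 ≤ (L - μ) ^ 2 := pow_le_pow_left₀ hbμ (by linarith) 2
  refine div_le_of_le_mul₀ (by positivity) (sub_nonneg.2 hp1) ?_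
  nlinarith [weight_mul_eq hmean hm2, mul_le_mul_of_nonneg_left hsq (sub_nonneg.2 hp1)]

end TwoPoint

theorem stmt18_general (μ L s2 a b p : ℝ)
    (ha : 0 ≤ a) (hab : a ≤ b) (hbL : b ≤ L)
    (hp0 : 0 ≤ p) (hp1 : p ≤ 1)
    (hmean : p * a + (1 - p) * b = μ)
    (hm2 : p * a ^ 2 + (1 - p) * b ^ 2 = μ ^ 2 + s2) :
    μ + s2 / μ ≤ b ∧ s2 / ((L - μ) ^ 2 + s2) ≤ 1 - p :=
  ⟨TwoPoint.add_div_mean_le_right ha hab hp0 hp1 hmean hm2,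
    TwoPoint.div_le_one_sub_weight hab hbL hp0 hp1 hmean hm2⟩

theorem stmt18 (μ L s2 a b p : ℝ) (hμ : 0 < μ) (hL : 0 < L) (hs2 : 0 ≤ s2)
    (hfeas : s2 ≤ μ * (L - μ)) (ha : 0 ≤ a) (hab : a ≤ b) (hbL : b ≤ L)
    (hp0 : 0 ≤ p) (hp1 : p ≤ 1)
    (hmean : p * a + (1 - p) * b = μ)
    (hm2 : p * a ^ 2 + (1 - p) * b ^ 2 = μ ^ 2 + s2) :
    μ + s2 / μ ≤ b ∧ s2 / ((L - μ) ^ 2 + s2) ≤ 1 - p :=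
  stmt18_general μ L s2 a b p ha hab hbL hp0 hp1 hmean hm2
end

section
/- Let μ > 0, L > 0 and σ² > 0 with σ² ≤ μ(L − μ), and let n ∈ ℕ. Let X₁, …, Xₙ be independent random variables such that each Xᵢ is distributed according to some (possibly different) distribution in P₂(μ,σ²,L). Then the probability that at least one of X₁, …, Xₙ is at least μ + σ²/μ satisfies ℙ(∃ i ∈ {1,…,n} : Xᵢ ≥ μ + σ²/μ) ≥ 1 − ((L − μ)²/((L − μ)² + σ²))^n. -/
open MeasureTheory

open ProbabilityTheory

/-!
For a two-point law `p δ_a + (1 - p) δ_b` with mean `μ` and variance `σ²` one has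
`σ² = p (1 - p) (b - a)²` and `b - μ = p (b - a)`. Hence `μ (b - μ) - σ² = p (b - a) a ≥ 0`, so the
upper atom satisfies `b ≥ μ + σ²/μ`, and `p σ² = (1 - p)(b - μ)² ≤ (1 - p)(L - μ)²`, so the mass
below `μ + σ²/μ` is at most `p ≤ (L - μ)² / ((L - μ)² + σ²)`. By independence all `n` variables
stay below the threshold with probability at most the `n`-th power of this bound.
-/

lemma twoPoint_univ {p : ℝ} (hp0 : 0 ≤ p) (hp1 : p ≤ 1) (a b : ℝ) :
    twoPoint p a b Set.univ = 1 := by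
  simp only [twoPoint, Measure.add_apply, Measure.smul_apply, measure_univ, smul_eq_mul, mul_one]
  rw [← ENNReal.ofReal_add hp0 (sub_nonneg.2 hp1), add_sub_cancel, ENNReal.ofReal_one]

lemma twoPoint_apply_le_of_notMem (p a : ℝ) {b : ℝ} {s : Set ℝ} (hb : b ∉ s) :
    twoPoint p a b s ≤ ENNReal.ofReal p := by
  simp only [twoPoint, Measure.add_apply, Measure.smul_apply, Measure.dirac_apply,
    Set.indicator_of_notMem hb, smul_eq_mul, mul_zero, add_zero]
  exact mul_le_of_le_one_right' (Set.indicator_le_self' (fun _ _ => zero_le_one) a)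

section Moments

variable {p a b μ s2 : ℝ}
  (hmean : p * a + (1 - p) * b = μ) (hsec : p * a ^ 2 + (1 - p) * b ^ 2 = μ ^ 2 + s2)
include hmean

lemma twoPoint_sub_mean_eq : b - μ = p * (b - a) := by
  rw [← hmean]; ring

include hsec

lemma twoPoint_variance_eq : s2 = p * (1 - p) * (b - a) ^ 2 := by
  linear_combination -hsec + (μ + p * a + (1 - p) * b) * hmean

lemma twoPoint_mul_variance_eq : p * s2 = (1 - p) * (b - μ) ^ 2 := by
  rw [twoPoint_variance_eq hmean hsec, twoPoint_sub_mean_eq hmean]; ring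

lemma twoPoint_variance_le_mean_mul (ha : 0 ≤ a) (hab : a ≤ b) (hp : 0 ≤ p) :
    s2 ≤ μ * (b - μ) := by
  have key : μ * (b - μ) - s2 = p * (b - a) * a := by
    rw [twoPoint_variance_eq hmean hsec, twoPoint_sub_mean_eq hmean, ← hmean]; ring
  nlinarith [mul_nonneg (mul_nonneg hp (sub_nonneg.2 hab)) ha]

lemma twoPoint_mean_add_div_le_right (hμ : 0 < μ) (ha : 0 ≤ a) (hab : a ≤ b) (hp : 0 ≤ p) :
    μ + s2 / μ ≤ b := by
  rw [← le_sub_iff_add_le', div_le_iff₀' hμ]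
  exact twoPoint_variance_le_mean_mul hmean hsec ha hab hp

lemma twoPoint_weight_le {L : ℝ} (hs2 : 0 < s2) (hab : a ≤ b) (hbL : b ≤ L) (hp0 : 0 ≤ p)
    (hp1 : p ≤ 1) :
    p ≤ (L - μ) ^ 2 / ((L - μ) ^ 2 + s2) := by
  have hμb : 0 ≤ b - μ := by
    rw [twoPoint_sub_mean_eq hmean]; exact mul_nonneg hp0 (sub_nonneg.2 hab)
  have hsq : (b - μ) ^ 2 ≤ (L - μ) ^ 2 := pow_le_pow_left₀ hμb (by linarith) 2
  rw [le_div_iff₀ (by positivity)]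
  nlinarith [mul_le_mul_of_nonneg_left hsq (sub_nonneg.2 hp1), twoPoint_mul_variance_eq hmean hsec]

end Moments

lemma ne_zero_of_mem_P2set {μ s2 L : ℝ} {P : Measure ℝ} (hP : P ∈ P2set μ s2 L) : P ≠ 0 := by
  obtain ⟨p, a, b, -, -, -, hp0, hp1, -, -, rfl⟩ := hP
  intro h
  simpa [h] using twoPoint_univ hp0 hp1 a b

lemma measure_Iio_le_of_mem_P2set {μ s2 L : ℝ} (hμ : 0 < μ) (hs2 : 0 < s2) {P : Measure ℝ}
    (hP : P ∈ P2set μ s2 L) :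
    P (Set.Iio (μ + s2 / μ)) ≤ ENNReal.ofReal ((L - μ) ^ 2 / ((L - μ) ^ 2 + s2)) := by
  obtain ⟨p, a, b, ha, hab, hbL, hp0, hp1, hmean, hsec, rfl⟩ := hP
  have hb : b ∉ Set.Iio (μ + s2 / μ) :=
    not_lt.2 (twoPoint_mean_add_div_le_right hmean hsec hμ ha hab hp0)
  exact (twoPoint_apply_le_of_notMem p a hb).trans
    (ENNReal.ofReal_le_ofReal (twoPoint_weight_le hmean hsec hs2 hab hbL hp0 hp1))

lemma one_sub_pow_le_measure_exists_notMem {Ω ι β : Type*} [MeasurableSpace Ω] [Fintype ι]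
    [MeasurableSpace β] {Pr : Measure Ω} [IsProbabilityMeasure Pr] {X : ι → Ω → β}
    (hindep : iIndepFun X Pr) {s : Set β} (hs : MeasurableSet s) {c : ENNReal}
    (hc : ∀ i, Pr (X i ⁻¹' s) ≤ c) :
    1 - c ^ Fintype.card ι ≤ Pr {ω | ∃ i, X i ω ∉ s} := by
  have hcompl : {ω | ∃ i, X i ω ∉ s}ᶜ = ⋂ i ∈ Finset.univ, X i ⁻¹' s := by
    ext ω; simp
  have hmiss : Pr {ω | ∃ i, X i ω ∉ s}ᶜ ≤ c ^ Fintype.card ι := by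
    rw [hcompl, hindep.measure_inter_preimage_eq_mul Finset.univ (fun _ _ => hs),
      ← Finset.card_univ, ← Finset.prod_const]
    exact Finset.prod_le_prod' fun i _ => hc i
  rw [tsub_le_iff_right]
  calc (1 : ENNReal) = Pr Set.univ := measure_univ.symm
    _ ≤ Pr {ω | ∃ i, X i ω ∉ s} + Pr {ω | ∃ i, X i ω ∉ s}ᶜ := measure_univ_le_add_compl _
    _ ≤ Pr {ω | ∃ i, X i ω ∉ s} + c ^ Fintype.card ι := by gcongr

theorem stmt19_general (μ L s2 : ℝ) (hμ : 0 < μ) (hs2 : 0 < s2) (n : ℕ)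
    {Ω : Type*} [MeasurableSpace Ω] (Pr : Measure Ω) [IsProbabilityMeasure Pr]
    (X : Fin n → Ω → ℝ)
    (hindep : iIndepFun X Pr)
    (hdist : ∀ i, Pr.map (X i) ∈ P2set μ s2 L) :
    ENNReal.ofReal (1 - ((L - μ) ^ 2 / ((L - μ) ^ 2 + s2)) ^ n) ≤
      Pr {ω | ∃ i : Fin n, μ + s2 / μ ≤ X i ω} := by
  have hbelow : ∀ i, Pr (X i ⁻¹' Set.Iio (μ + s2 / μ)) ≤
      ENNReal.ofReal ((L - μ) ^ 2 / ((L - μ) ^ 2 + s2)) := fun i => by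
    have hX : AEMeasurable (X i) Pr := .of_map_ne_zero (ne_zero_of_mem_P2set (hdist i))
    rw [← Measure.map_apply_of_aemeasurable hX measurableSet_Iio]
    exact measure_Iio_le_of_mem_P2set hμ hs2 (hdist i)
  have h := one_sub_pow_le_measure_exists_notMem hindep measurableSet_Iio hbelow
  simp only [Fintype.card_fin, Set.mem_Iio, not_lt] at h
  rw [ENNReal.ofReal_sub _ (by positivity), ENNReal.ofReal_one, ENNReal.ofReal_pow (by positivity)]
  exact h

theorem stmt19 (μ L s2 : ℝ) (hμ : 0 < μ) (hL : 0 < L) (hs2 : 0 < s2)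
    (hfeas : s2 ≤ μ * (L - μ)) (n : ℕ)
    {Ω : Type*} [MeasurableSpace Ω] (Pr : Measure Ω) [IsProbabilityMeasure Pr]
    (X : Fin n → Ω → ℝ) (hmeas : ∀ i, Measurable (X i))
    (hindep : iIndepFun X Pr)
    (hdist : ∀ i, Pr.map (X i) ∈ P2set μ s2 L) :
    ENNReal.ofReal (1 - ((L - μ) ^ 2 / ((L - μ) ^ 2 + s2)) ^ n) ≤
      Pr {ω | ∃ i : Fin n, μ + s2 / μ ≤ X i ω} :=
  stmt19_general μ L s2 hμ hs2 n Pr X hindep hdist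
end
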